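/- arXiv:2306.09740 — 8 statements merged into one kernel-verified Lean document; each statement's English description precedes it below -/
import Mathlib

section
/- For every point μ ∈ X and every Borel probability measure P on X, the metric spatial depth satisfies 0 ≤ D(μ; P) ≤ 2. -/
open MeasureTheory
open scoped Classical

/-- The kernel `h` of the metric spatial depth. -/
noncomputable def mh {X : Type*} [MetricSpace X] (x₁ x₂ x₃ : X) : ℝ :=
  if x₃ = x₁ ∨ x₃ = x₂ then 0
  else (dist x₁ x₃ ^ 2 + dist x₂ x₃ ^ 2 - dist x₁ x₂ ^ 2) / (dist x₁ x₃ * dist x₂ x₃)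

lemma abs_mh_le {X : Type*} [MetricSpace X] (x₁ x₂ x₃ : X) : |mh x₁ x₂ x₃| ≤ 2 := by
  unfold mh
  split_ifs with h
  · norm_num
  · push_neg at h
    have ha : 0 < dist x₁ x₃ := dist_pos.mpr fun e => h.1 e.symm
    have hb : 0 < dist x₂ x₃ := dist_pos.mpr fun e => h.2 e.symm
    have ht1 : dist x₁ x₂ ≤ dist x₁ x₃ + dist x₂ x₃ := by
      simpa [dist_comm] using dist_triangle x₁ x₃ x₂
    have ht2 : dist x₁ x₃ ≤ dist x₁ x₂ + dist x₂ x₃ := dist_triangle x₁ x₂ x₃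
    have ht3 : dist x₂ x₃ ≤ dist x₁ x₂ + dist x₁ x₃ := by
      simpa [dist_comm] using dist_triangle x₂ x₁ x₃
    have hc : 0 ≤ dist x₁ x₂ := dist_nonneg
    rw [abs_le]
    constructor
    · rw [le_div_iff₀ (by positivity)]
      nlinarith
    · rw [div_le_iff₀ (by positivity)]
      nlinarith

/-- The metric spatial depth of `μ` with respect to the measure `P`. -/
noncomputable def msDepth {X : Type*} [MetricSpace X] [MeasurableSpace X]
    (μ : X) (P : Measure X) : ℝ :=
  1 - (1 / 2) * ∫ x₁, ∫ x₂, mh x₁ x₂ μ ∂P ∂P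

theorem msDepth_mem_Icc {X : Type*} [MetricSpace X] [CompleteSpace X]
    [SecondCountableTopology X] [MeasurableSpace X] [BorelSpace X]
    (μ : X) (P : Measure X) [IsProbabilityMeasure P] :
    msDepth μ P ∈ Set.Icc (0 : ℝ) 2 := by
  have key : |∫ x₁, ∫ x₂, mh x₁ x₂ μ ∂P ∂P| ≤ 2 := by
    have h1 : ∀ x₁ : X, ‖∫ x₂, mh x₁ x₂ μ ∂P‖ ≤ 2 := fun x₁ => by
      calc ‖∫ x₂, mh x₁ x₂ μ ∂P‖ ≤ 2 * (P Set.univ).toReal :=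
            norm_integral_le_of_norm_le_const
              (Filter.Eventually.of_forall fun x₂ => by
                simpa [Real.norm_eq_abs] using abs_mh_le x₁ x₂ μ)
        _ = 2 := by simp
    calc |∫ x₁, ∫ x₂, mh x₁ x₂ μ ∂P ∂P| ≤ 2 * (P Set.univ).toReal :=
          norm_integral_le_of_norm_le_const (Filter.Eventually.of_forall h1)
      _ = 2 := by simp
  rw [abs_le] at key
  unfold msDepth
  constructor <;> [linarith [key.2]; linarith [key.1]]
end

section
/- For μ ∈ X and a Borel probability measure P on X, the metric spatial depth satisfies D(μ; P) = 2 if and only if P({μ}) = 0 and the product measure P⊗P assigns probability 1 to the set of pairs (x₁, x₂) such that d(x₁, x₂) = d(x₁, μ) + d(μ, x₂), i.e., μ almost surely lies on a metric line between two independently sampled points. -/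
open MeasureTheory
open scoped Classical

lemma mh_ge {X : Type*} [MetricSpace X] (x₁ x₂ x₃ : X) : -2 ≤ mh x₁ x₂ x₃ := by
  unfold mh
  split_ifs with h
  · norm_num
  · push_neg at h
    have ha : 0 < dist x₁ x₃ := dist_pos.2 fun e => h.1 e.symm
    have hb : 0 < dist x₂ x₃ := dist_pos.2 fun e => h.2 e.symm
    have hc : dist x₁ x₂ ≤ dist x₁ x₃ + dist x₂ x₃ := by
      have := dist_triangle x₁ x₃ x₂
      rw [dist_comm x₃ x₂] at this
      linarith
    have hc0 : 0 ≤ dist x₁ x₂ := dist_nonneg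
    rw [le_div_iff₀ (by positivity)]
    nlinarith

lemma mh_le {X : Type*} [MetricSpace X] (x₁ x₂ x₃ : X) : mh x₁ x₂ x₃ ≤ 2 := by
  unfold mh
  split_ifs with h
  · norm_num
  · push_neg at h
    have ha : 0 < dist x₁ x₃ := dist_pos.2 fun e => h.1 e.symm
    have hb : 0 < dist x₂ x₃ := dist_pos.2 fun e => h.2 e.symm
    have hc : |dist x₁ x₃ - dist x₂ x₃| ≤ dist x₁ x₂ := abs_dist_sub_le x₁ x₂ x₃
    have hc2 : (dist x₁ x₃ - dist x₂ x₃) ^ 2 ≤ dist x₁ x₂ ^ 2 := by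
      calc (dist x₁ x₃ - dist x₂ x₃) ^ 2 = |dist x₁ x₃ - dist x₂ x₃| ^ 2 := (sq_abs _).symm
        _ ≤ dist x₁ x₂ ^ 2 := by
            apply pow_le_pow_left₀ (abs_nonneg _) hc
    rw [div_le_iff₀ (by positivity)]
    nlinarith

lemma mh_eq_neg_two_iff {X : Type*} [MetricSpace X] (x₁ x₂ μ : X) :
    mh x₁ x₂ μ = -2 ↔
      x₁ ≠ μ ∧ x₂ ≠ μ ∧ dist x₁ x₂ = dist x₁ μ + dist μ x₂ := by
  unfold mh
  split_ifs with h
  · constructor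
    · intro h'; norm_num at h'
    · rintro ⟨h1, h2, -⟩
      rcases h with h | h
      · exact (h1 h.symm).elim
      · exact (h2 h.symm).elim
  · push_neg at h
    have ha : 0 < dist x₁ μ := dist_pos.2 fun e => h.1 e.symm
    have hb : 0 < dist x₂ μ := dist_pos.2 fun e => h.2 e.symm
    have hc : dist x₁ x₂ ≤ dist x₁ μ + dist x₂ μ := by
      have := dist_triangle x₁ μ x₂
      rw [dist_comm μ x₂] at this
      linarith
    have hc0 : 0 ≤ dist x₁ x₂ := dist_nonneg
    rw [div_eq_iff (by positivity : dist x₁ μ * dist x₂ μ ≠ 0)]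
    constructor
    · intro he
      refine ⟨fun e => h.1 e.symm, fun e => h.2 e.symm, ?_⟩
      rw [dist_comm μ x₂]
      have : dist x₁ x₂ ^ 2 = (dist x₁ μ + dist x₂ μ) ^ 2 := by nlinarith
      nlinarith
    · rintro ⟨-, -, he⟩
      rw [dist_comm μ x₂] at he
      rw [he]; ring

lemma mh_measurable {X : Type*} [MetricSpace X] [SecondCountableTopology X]
    [MeasurableSpace X] [BorelSpace X] (μ : X) :
    Measurable (fun p : X × X => mh p.1 p.2 μ) := by
  unfold mh
  apply Measurable.ite
  · exact ((isClosed_eq continuous_const continuous_fst).union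
      (isClosed_eq continuous_const continuous_snd)).measurableSet
  · exact measurable_const
  · apply Measurable.div
    · apply Measurable.sub
      · apply Measurable.add
        · exact ((continuous_fst.dist continuous_const).measurable).pow_const 2
        · exact ((continuous_snd.dist continuous_const).measurable).pow_const 2
      · exact ((continuous_fst.dist continuous_snd).measurable).pow_const 2
    · exact ((continuous_fst.dist continuous_const).measurable).mul
        ((continuous_snd.dist continuous_const).measurable)

theorem msDepth_eq_two_iff {X : Type*} [MetricSpace X] [CompleteSpace X]
    [SecondCountableTopology X] [MeasurableSpace X] [BorelSpace X]
    (μ : X) (P : Measure X) [IsProbabilityMeasure P] :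
    msDepth μ P = 2 ↔
      P {μ} = 0 ∧
      (P.prod P) {p : X × X | dist p.1 p.2 = dist p.1 μ + dist μ p.2} = 1 := by
  set f : X × X → ℝ := fun p => mh p.1 p.2 μ with hf
  have hmeas : Measurable f := mh_measurable μ
  have hint : Integrable f (P.prod P) := by
    refine ⟨hmeas.aestronglyMeasurable, HasFiniteIntegral.of_bounded (C := 2) ?_⟩
    filter_upwards with p
    rw [Real.norm_eq_abs, abs_le]
    exact ⟨mh_ge _ _ _, mh_le _ _ _⟩
  have hprod : ∫ x₁, ∫ x₂, mh x₁ x₂ μ ∂P ∂P = ∫ p, f p ∂(P.prod P) :=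
    (integral_prod f hint).symm
  have key : (∫ p, f p ∂(P.prod P) = -2) ↔ ∀ᵐ p ∂(P.prod P), f p = -2 := by
    have h2 : Integrable (fun p => f p + 2) (P.prod P) := hint.add (integrable_const 2)
    have hsum : ∫ p, (f p + 2) ∂(P.prod P) = ∫ p, f p ∂(P.prod P) + 2 := by
      rw [integral_add hint (integrable_const 2), integral_const]
      simp
    constructor
    · intro h
      have h0 : ∫ p, (f p + 2) ∂(P.prod P) = 0 := by rw [hsum, h]; ring
      have hnn : 0 ≤ᵐ[P.prod P] fun p => f p + 2 := by
        filter_upwards with p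
        have := mh_ge p.1 p.2 μ
        simp only [hf, Pi.zero_apply]
        linarith
      have := (integral_eq_zero_iff_of_nonneg_ae hnn h2).mp h0
      filter_upwards [this] with p hp
      have : f p + 2 = 0 := hp
      linarith
    · intro h
      calc ∫ p, f p ∂(P.prod P) = ∫ _, (-2 : ℝ) ∂(P.prod P) := integral_congr_ae h
        _ = -2 := by simp
  have hS : MeasurableSet {p : X × X | dist p.1 p.2 = dist p.1 μ + dist μ p.2} :=
    (isClosed_eq (continuous_fst.dist continuous_snd)
      ((continuous_fst.dist continuous_const).add
        (continuous_const.dist continuous_snd))).measurableSet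
  have h1meas : (P.prod P) {p : X × X | p.1 = μ} = P {μ} := by
    have : {p : X × X | p.1 = μ} = {μ} ×ˢ Set.univ := by
      ext p
      simp only [Set.mem_setOf_eq, Set.mem_prod, Set.mem_singleton_iff, Set.mem_univ, and_true]
    rw [this, Measure.prod_prod]
    simp
  have h2meas : (P.prod P) {p : X × X | p.2 = μ} = P {μ} := by
    have : {p : X × X | p.2 = μ} = Set.univ ×ˢ {μ} := by
      ext p
      simp only [Set.mem_setOf_eq, Set.mem_prod, Set.mem_singleton_iff, Set.mem_univ, true_and]
    rw [this, Measure.prod_prod]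
    simp
  have haeiff : (∀ᵐ p ∂(P.prod P), f p = -2) ↔
      P {μ} = 0 ∧
      (P.prod P) {p : X × X | dist p.1 p.2 = dist p.1 μ + dist μ p.2} = 1 := by
    constructor
    · intro h
      have h' : ∀ᵐ p ∂(P.prod P),
          p.1 ≠ μ ∧ p.2 ≠ μ ∧ dist p.1 p.2 = dist p.1 μ + dist μ p.2 := by
        filter_upwards [h] with p hp
        exact (mh_eq_neg_two_iff p.1 p.2 μ).mp hp
      constructor
      · rw [← h1meas]
        have : ∀ᵐ p ∂(P.prod P), p ∉ {p : X × X | p.1 = μ} := by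
          filter_upwards [h'] with p hp
          exact hp.1
        simpa [ae_iff] using this
      · rw [← prob_compl_eq_zero_iff hS]
        have : ∀ᵐ p ∂(P.prod P),
            p ∈ {p : X × X | dist p.1 p.2 = dist p.1 μ + dist μ p.2} := by
          filter_upwards [h'] with p hp
          exact hp.2.2
        simpa [ae_iff, Set.compl_setOf] using this
    · rintro ⟨hμ, hline⟩
      have a1 : ∀ᵐ p ∂(P.prod P), p.1 ≠ μ := by
        rw [ae_iff]
        simpa [h1meas] using hμ
      have a2 : ∀ᵐ p ∂(P.prod P), p.2 ≠ μ := by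
        rw [ae_iff]
        simpa [h2meas] using hμ
      have a3 : ∀ᵐ p ∂(P.prod P),
          dist p.1 p.2 = dist p.1 μ + dist μ p.2 := by
        rw [ae_iff]
        have := prob_compl_eq_zero_iff hS |>.mpr hline
        simpa [Set.compl_setOf] using this
      filter_upwards [a1, a2, a3] with p hp1 hp2 hp3
      exact (mh_eq_neg_two_iff p.1 p.2 μ).mpr ⟨hp1, hp2, hp3⟩
  rw [← haeiff, ← key]
  unfold msDepth
  rw [hprod]
  constructor
  · intro h; linarith
  · intro h; rw [h]; ring
end

section
/- Fix μ, z ∈ X, a Borel probability measure P on X, and ε ∈ [0, 1]. Let Q_ε := (1 − ε)·P + ε·δ_z be the mixture of P with the Dirac point mass δ_z at z. Then D(μ; Q_ε) = 1 − (1 − ε)²·(1 − D(μ; P)) − ε·(1 − ε)·∫ h(x, z, μ) dP(x) − ε²·𝟙(μ ≠ z). -/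
open MeasureTheory
open scoped Classical

section aux

variable {X : Type*} [MetricSpace X]

lemma mh_symm (x₁ x₂ x₃ : X) : mh x₁ x₂ x₃ = mh x₂ x₁ x₃ := by
  unfold mh
  by_cases h : x₃ = x₁ ∨ x₃ = x₂
  · rw [if_pos h, if_pos (or_comm.mp h)]
  · rw [if_neg h, if_neg (fun hh => h (or_comm.mp hh)), dist_comm x₂ x₁]
    ring

lemma mh_self (z x₃ : X) : mh z z x₃ = if x₃ = z then 0 else 2 := by
  unfold mh
  simp only [or_self]
  split_ifs with h
  · rfl
  · have hd : dist z x₃ ≠ 0 := by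
      rw [dist_comm, dist_ne_zero]
      exact h
    rw [dist_self]
    field_simp
    ring

lemma abs_mh_le_two (x₁ x₂ x₃ : X) : |mh x₁ x₂ x₃| ≤ 2 := by
  unfold mh
  split_ifs with h
  · norm_num
  · push_neg at h
    have h1 : (0:ℝ) < dist x₁ x₃ := dist_pos.2 (Ne.symm h.1)
    have h2 : (0:ℝ) < dist x₂ x₃ := dist_pos.2 (Ne.symm h.2)
    have ht : dist x₁ x₂ ≤ dist x₁ x₃ + dist x₂ x₃ := by
      rw [dist_comm x₂ x₃]; exact dist_triangle x₁ x₃ x₂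
    have ht2 : |dist x₁ x₃ - dist x₂ x₃| ≤ dist x₁ x₂ := abs_dist_sub_le x₁ x₂ x₃
    obtain ⟨ha, hb⟩ := abs_le.1 ht2
    have hd0 : (0:ℝ) ≤ dist x₁ x₂ := dist_nonneg
    rw [abs_div, abs_of_pos (mul_pos h1 h2), div_le_iff₀ (mul_pos h1 h2), abs_le]
    constructor <;> nlinarith

lemma measurable_mh (x₃ : X) [MeasurableSpace X] [BorelSpace X]
    [SecondCountableTopology X] :
    Measurable (fun p : X × X => mh p.1 p.2 x₃) := by
  unfold mh
  apply Measurable.ite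
  · have : {p : X × X | x₃ = p.1 ∨ x₃ = p.2} =
      (Prod.fst ⁻¹' {x₃}) ∪ (Prod.snd ⁻¹' {x₃}) := by
      ext p; simp [eq_comm]
    rw [this]
    exact (measurable_fst (measurableSet_singleton x₃)).union
      (measurable_snd (measurableSet_singleton x₃))
  · measurability
  · measurability

lemma integral_mix [MeasurableSpace X] [BorelSpace X] [SecondCountableTopology X]
    (z : X) (P : Measure X) [IsProbabilityMeasure P]
    {ε : ℝ} (hε0 : 0 ≤ ε) (hε1 : ε ≤ 1)
    {f : X → ℝ} (hm : StronglyMeasurable f) {C : ℝ} (hb : ∀ x, |f x| ≤ C) :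
    ∫ x, f x ∂(ENNReal.ofReal (1 - ε) • P + ENNReal.ofReal ε • Measure.dirac z)
      = (1 - ε) * ∫ x, f x ∂P + ε * f z := by
  have hiP : Integrable f P :=
    Integrable.mono' (integrable_const C) hm.aestronglyMeasurable
      (ae_of_all _ fun x => by simpa using hb x)
  have hiD : Integrable f (Measure.dirac z) :=
    Integrable.mono' (integrable_const C) hm.aestronglyMeasurable
      (ae_of_all _ fun x => by simpa using hb x)
  rw [integral_add_measure (hiP.smul_measure ENNReal.ofReal_ne_top)
        (hiD.smul_measure ENNReal.ofReal_ne_top),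
      integral_smul_measure, integral_smul_measure, integral_dirac' f z hm,
      ENNReal.toReal_ofReal (by linarith : (0:ℝ) ≤ 1 - ε), ENNReal.toReal_ofReal hε0]
  simp [smul_eq_mul]

end aux

theorem msDepth_mixture {X : Type*} [MetricSpace X] [CompleteSpace X]
    [SecondCountableTopology X] [MeasurableSpace X] [BorelSpace X]
    (μ z : X) (P : Measure X) [IsProbabilityMeasure P]
    (ε : ℝ) (hε0 : 0 ≤ ε) (hε1 : ε ≤ 1) :
    msDepth μ (ENNReal.ofReal (1 - ε) • P + ENNReal.ofReal ε • Measure.dirac z) =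
      1 - (1 - ε) ^ 2 * (1 - msDepth μ P)
        - ε * (1 - ε) * ∫ x, mh x z μ ∂P
        - ε ^ 2 * (if μ ≠ z then 1 else 0) := by
  have hjm : Measurable (fun p : X × X => mh p.1 p.2 μ) := measurable_mh μ
  set I : X → ℝ := fun x₁ => ∫ x₂, mh x₁ x₂ μ ∂P with hI
  have hImeas : StronglyMeasurable I :=
    StronglyMeasurable.integral_prod_right' (hjm.stronglyMeasurable)
  have hmx : ∀ x₁ : X, StronglyMeasurable (fun x₂ => mh x₁ x₂ μ) := fun x₁ =>
    (hjm.comp (measurable_const.prodMk measurable_id)).stronglyMeasurable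
  have hmz : StronglyMeasurable (fun x₁ => mh x₁ z μ) :=
    (hjm.comp (measurable_id.prodMk measurable_const)).stronglyMeasurable
  have hIb : ∀ x₁, |I x₁| ≤ 2 := by
    intro x₁
    have := norm_integral_le_of_norm_le_const (μ := P) (f := fun x₂ => mh x₁ x₂ μ) (C := 2)
      (ae_of_all _ fun x₂ => by simpa using abs_mh_le_two x₁ x₂ μ)
    simpa using this
  -- the outer integrand after evaluating the inner integral
  have hG : StronglyMeasurable (fun x₁ => (1 - ε) * I x₁ + ε * mh x₁ z μ) :=
    (stronglyMeasurable_const.mul hImeas).add (stronglyMeasurable_const.mul hmz)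
  have hGb : ∀ x₁, |(1 - ε) * I x₁ + ε * mh x₁ z μ| ≤ 4 := by
    intro x₁
    have h1 := hIb x₁
    have h2 := abs_mh_le_two x₁ z μ
    have e1 : |1 - ε| ≤ 1 := by rw [abs_of_nonneg (by linarith)]; linarith
    have e2 : |ε| ≤ 1 := by rw [abs_of_nonneg hε0]; linarith
    calc |(1 - ε) * I x₁ + ε * mh x₁ z μ|
        ≤ |(1 - ε) * I x₁| + |ε * mh x₁ z μ| := abs_add_le _ _
      _ = |1 - ε| * |I x₁| + |ε| * |mh x₁ z μ| := by rw [abs_mul, abs_mul]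
      _ ≤ 1 * 2 + 1 * 2 := by
          gcongr
      _ ≤ 4 := by norm_num
  have hinner : ∀ x₁ : X,
      ∫ x₂, mh x₁ x₂ μ ∂(ENNReal.ofReal (1 - ε) • P + ENNReal.ofReal ε • Measure.dirac z)
        = (1 - ε) * I x₁ + ε * mh x₁ z μ := fun x₁ =>
    integral_mix z P hε0 hε1 (hmx x₁) (fun x₂ => abs_mh_le_two x₁ x₂ μ)
  have hIz : I z = ∫ x, mh x z μ ∂P := by
    simp only [hI]
    congr 1
    ext x
    exact mh_symm z x μ
  have hiI : Integrable I P :=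
    Integrable.mono' (integrable_const 2) hImeas.aestronglyMeasurable
      (ae_of_all _ fun x => by simpa using hIb x)
  have hiz : Integrable (fun x₁ => mh x₁ z μ) P :=
    Integrable.mono' (integrable_const 2) hmz.aestronglyMeasurable
      (ae_of_all _ fun x => by simpa using abs_mh_le_two x z μ)
  have houter :
      ∫ x₁, ∫ x₂, mh x₁ x₂ μ
          ∂(ENNReal.ofReal (1 - ε) • P + ENNReal.ofReal ε • Measure.dirac z)
        ∂(ENNReal.ofReal (1 - ε) • P + ENNReal.ofReal ε • Measure.dirac z)
      = (1 - ε) * ((1 - ε) * ∫ x₁, I x₁ ∂P + ε * ∫ x, mh x z μ ∂P)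
          + ε * ((1 - ε) * ∫ x, mh x z μ ∂P + ε * mh z z μ) := by
    have step1 :
        ∫ x₁, ∫ x₂, mh x₁ x₂ μ
            ∂(ENNReal.ofReal (1 - ε) • P + ENNReal.ofReal ε • Measure.dirac z)
          ∂(ENNReal.ofReal (1 - ε) • P + ENNReal.ofReal ε • Measure.dirac z)
        = ∫ x₁, ((1 - ε) * I x₁ + ε * mh x₁ z μ)
            ∂(ENNReal.ofReal (1 - ε) • P + ENNReal.ofReal ε • Measure.dirac z) := by
      congr 1
      ext x₁
      exact hinner x₁
    rw [step1, integral_mix z P hε0 hε1 hG hGb,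
        integral_add (hiI.const_mul _) (hiz.const_mul _),
        integral_const_mul, integral_const_mul, hIz]
  unfold msDepth
  rw [houter, mh_self]
  by_cases hz : μ = z
  · subst hz
    simp only [if_pos rfl, ne_eq, not_true_eq_false, if_false, if_true, eq_self_iff_true,
      mul_zero, sub_zero]
    ring
  · rw [if_neg hz, if_pos hz]
    ring
end

section
/- Let H be a separable real Hilbert space with inner product ⟨·,·⟩, induced norm ‖·‖ and induced metric d(x, y) = ‖x − y‖, and let P be a Borel probability measure on H. Then for every μ ∈ H, the metric spatial depth equals D(μ; P) = 1 − ‖∫ sgn(x − μ) dP(x)‖², where sgn(x) := x/‖x‖ for x ≠ 0, sgn(0) := 0, and the integral is the Bochner integral of the (bounded) map x ↦ sgn(x − μ). -/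
open MeasureTheory
open scoped Classical

/-- The spatial sign function on a Hilbert space. -/
noncomputable def hsgn {H : Type*} [NormedAddCommGroup H] [InnerProductSpace ℝ H]
    (x : H) : H :=
  if x = 0 then 0 else ‖x‖⁻¹ • x

lemma norm_hsgn_le {H : Type*} [NormedAddCommGroup H] [InnerProductSpace ℝ H] (x : H) :
    ‖hsgn x‖ ≤ 1 := by
  unfold hsgn
  split_ifs with h
  · simp
  · rw [norm_smul, norm_inv, norm_norm, inv_mul_cancel₀ (norm_ne_zero_iff.mpr h)]

lemma mh_eq_inner {H : Type*} [NormedAddCommGroup H] [InnerProductSpace ℝ H]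
    (x₁ x₂ μ : H) :
    mh x₁ x₂ μ = 2 * (inner ℝ (hsgn (x₁ - μ)) (hsgn (x₂ - μ)) : ℝ) := by
  unfold mh hsgn
  by_cases h1 : μ = x₁
  · simp [h1, sub_self]
  by_cases h2 : μ = x₂
  · simp [h2, sub_self]
  have ha : x₁ - μ ≠ 0 := sub_ne_zero.mpr (fun h => h1 h.symm)
  have hb : x₂ - μ ≠ 0 := sub_ne_zero.mpr (fun h => h2 h.symm)
  rw [if_neg (by tauto), if_neg ha, if_neg hb]
  have hd1 : dist x₁ μ = ‖x₁ - μ‖ := dist_eq_norm _ _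
  have hd2 : dist x₂ μ = ‖x₂ - μ‖ := dist_eq_norm _ _
  have hd3 : dist x₁ x₂ = ‖(x₁ - μ) - (x₂ - μ)‖ := by
    rw [dist_eq_norm]; congr 1; abel
  rw [hd1, hd2, hd3]
  set a := x₁ - μ
  set b := x₂ - μ
  have hna : ‖a‖ ≠ 0 := norm_ne_zero_iff.mpr ha
  have hnb : ‖b‖ ≠ 0 := norm_ne_zero_iff.mpr hb
  rw [real_inner_smul_left, real_inner_smul_right,
    @norm_sub_sq_real H _ _ a b]
  field_simp
  ring

theorem msDepth_hilbert {H : Type*} [NormedAddCommGroup H] [InnerProductSpace ℝ H]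
    [CompleteSpace H] [SecondCountableTopology H] [MeasurableSpace H] [BorelSpace H]
    (μ : H) (P : Measure H) [IsProbabilityMeasure P] :
    msDepth μ P = 1 - ‖∫ x, hsgn (x - μ) ∂P‖ ^ 2 := by
  set g : H → H := fun x => hsgn (x - μ) with hg
  have hmeas : Measurable g := by
    have h1 : Measurable fun x : H => x - μ := measurable_id.sub_const μ
    have h2 : Measurable fun x : H => hsgn x := by
      unfold hsgn
      refine Measurable.ite (MeasurableSet.singleton 0) measurable_const ?_
      exact (measurable_norm.inv).smul measurable_id
    exact h2.comp h1
  have hint : Integrable g P := by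
    refine Integrable.mono' (integrable_const 1) hmeas.aestronglyMeasurable ?_
    filter_upwards with x
    exact norm_hsgn_le _
  set I := ∫ x, g x ∂P with hI
  have key : ∫ x₁, ∫ x₂, mh x₁ x₂ μ ∂P ∂P = 2 * ‖I‖ ^ 2 := by
    have step1 : ∀ x₁, ∫ x₂, mh x₁ x₂ μ ∂P = 2 * (inner ℝ (g x₁) I : ℝ) := by
      intro x₁
      have : ∫ x₂, mh x₁ x₂ μ ∂P = ∫ x₂, 2 * (inner ℝ (g x₁) (g x₂) : ℝ) ∂P := by
        congr 1; ext x₂; exact mh_eq_inner x₁ x₂ μ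
      rw [this, integral_const_mul, integral_inner hint]
    have step2 : ∫ x₁, ∫ x₂, mh x₁ x₂ μ ∂P ∂P
        = ∫ x₁, 2 * (inner ℝ I (g x₁) : ℝ) ∂P := by
      congr 1; ext x₁; rw [step1 x₁, real_inner_comm]
    rw [step2, integral_const_mul, integral_inner hint, ← hI,
      real_inner_self_eq_norm_sq]
  unfold msDepth
  rw [key]
  ring
end

section
/- Let P be a Borel probability measure on the real line ℝ equipped with the usual metric d(x, y) = |x − y|. Then for every μ ∈ ℝ, the metric spatial depth equals D(μ; P) = 1 − (P((μ, ∞)) − P((−∞, μ)))². -/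
open MeasureTheory
open scoped Classical

lemma real_sign_mul_abs (a : ℝ) : Real.sign a * |a| = a := by
  rcases lt_trichotomy a 0 with h | h | h
  · rw [Real.sign_of_neg h, abs_of_neg h]; ring
  · simp [h]
  · rw [Real.sign_of_pos h, abs_of_pos h]; ring

lemma mh_real (μ x₁ x₂ : ℝ) :
    mh x₁ x₂ μ = 2 * Real.sign (x₁ - μ) * Real.sign (x₂ - μ) := by
  unfold mh
  by_cases h : μ = x₁ ∨ μ = x₂
  · rw [if_pos h]
    rcases h with h | h <;> simp [← h]
  · rw [if_neg h]
    push_neg at h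
    have h1 : x₁ - μ ≠ 0 := sub_ne_zero.mpr (Ne.symm h.1)
    have h2 : x₂ - μ ≠ 0 := sub_ne_zero.mpr (Ne.symm h.2)
    have ha : |x₁ - μ| ≠ 0 := abs_ne_zero.mpr h1
    have hb : |x₂ - μ| ≠ 0 := abs_ne_zero.mpr h2
    have hnum : dist x₁ μ ^ 2 + dist x₂ μ ^ 2 - dist x₁ x₂ ^ 2
        = 2 * ((x₁ - μ) * (x₂ - μ)) := by
      simp only [Real.dist_eq, sq_abs]; ring
    have hden : dist x₁ μ * dist x₂ μ = |x₁ - μ| * |x₂ - μ| := by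
      simp [Real.dist_eq]
    rw [hnum, hden, div_eq_iff (mul_ne_zero ha hb)]
    calc 2 * ((x₁ - μ) * (x₂ - μ))
        = 2 * ((Real.sign (x₁ - μ) * |x₁ - μ|) * (Real.sign (x₂ - μ) * |x₂ - μ|)) := by
          rw [real_sign_mul_abs, real_sign_mul_abs]
      _ = 2 * Real.sign (x₁ - μ) * Real.sign (x₂ - μ) * (|x₁ - μ| * |x₂ - μ|) := by ring

theorem msDepth_real_line (μ : ℝ) (P : Measure ℝ) [IsProbabilityMeasure P] :
    msDepth μ P = 1 - ((P (Set.Ioi μ)).toReal - (P (Set.Iio μ)).toReal) ^ 2 := by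
  set g : ℝ → ℝ := fun x => Real.sign (x - μ) with hg
  have hgeq : g = fun x => (Set.Ioi μ).indicator (fun _ => (1:ℝ)) x
      - (Set.Iio μ).indicator (fun _ => (1:ℝ)) x := by
    funext x
    rcases lt_trichotomy x μ with h | h | h
    · simp [hg, Set.indicator_apply, Set.mem_Ioi, Set.mem_Iio, h, not_lt.mpr h.le,
        Real.sign_of_neg (by linarith : x - μ < 0)]
    · simp [hg, h]
    · simp [hg, Set.indicator_apply, Set.mem_Ioi, Set.mem_Iio, h, not_lt.mpr h.le,
        Real.sign_of_pos (by linarith : 0 < x - μ)]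
  have hi1 : Integrable ((Set.Ioi μ).indicator (fun _ => (1:ℝ))) P :=
    (integrable_const (1:ℝ)).indicator measurableSet_Ioi
  have hi2 : Integrable ((Set.Iio μ).indicator (fun _ => (1:ℝ))) P :=
    (integrable_const (1:ℝ)).indicator measurableSet_Iio
  have hgi : Integrable g P := by rw [hgeq]; exact hi1.sub hi2
  have hI : ∫ x, g x ∂P = (P (Set.Ioi μ)).toReal - (P (Set.Iio μ)).toReal := by
    rw [hgeq, integral_sub hi1 hi2, integral_indicator_const _ measurableSet_Ioi,
      integral_indicator_const _ measurableSet_Iio]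
    simp
    rfl
  set I := (P (Set.Ioi μ)).toReal - (P (Set.Iio μ)).toReal with hIdef
  have hinner : ∀ x₁, ∫ x₂, mh x₁ x₂ μ ∂P = 2 * g x₁ * I := by
    intro x₁
    have : (fun x₂ => mh x₁ x₂ μ) = fun x₂ => (2 * g x₁) * g x₂ := by
      funext x₂; rw [mh_real]
    rw [this, integral_const_mul, hI]
  unfold msDepth
  have : (fun x₁ => ∫ x₂, mh x₁ x₂ μ ∂P) = fun x₁ => (2 * I) * g x₁ := by
    funext x₁; rw [hinner]; ring
  rw [this, integral_const_mul, hI]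
  ring
end

section
/- Let (X, d) be a metric space, let n ≥ 2, let x₁, …, x_n ∈ X be distinct points, and let P put mass 1/n on each of x₁, …, x_n. Then the metric spatial depth of x₁ satisfies D(x₁; P) ≤ 1 + (1 − 1/n)(1 − 3/n), with equality if and only if d(x_i, x_j) = d(x_i, x₁) + d(x₁, x_j) for all distinct i, j ∈ {2, …, n}. -/
open MeasureTheory
open scoped Classical

lemma integrable_dirac_aux {X : Type*} [MeasurableSpace X] [MeasurableSingletonClass X]
    (f : X → ℝ) (a : X) : Integrable f (Measure.dirac a) := by
  have h : f =ᵐ[Measure.dirac a] fun _ => f a := by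
    rw [Filter.EventuallyEq, ae_dirac_eq]
    exact Filter.eventually_pure.2 rfl
  exact (integrable_const (f a)).congr h.symm

lemma integral_uniform_aux {X : Type*} [MeasurableSpace X] [MeasurableSingletonClass X] {n : ℕ}
    (x : Fin n → X) (f : X → ℝ) :
    ∫ a, f a ∂((n : ENNReal)⁻¹ • ∑ i, Measure.dirac (x i)) = (n : ℝ)⁻¹ * ∑ i, f (x i) := by
  rw [integral_smul_measure,
    integral_finset_sum_measure (fun i _ => integrable_dirac_aux f (x i))]
  simp [integral_dirac, ENNReal.toReal_inv]

theorem msDepth_uniform_discrete_bound {X : Type*} [MetricSpace X]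
    [MeasurableSpace X] [BorelSpace X]
    (n : ℕ) [NeZero n] (hn : 2 ≤ n) (x : Fin n → X) (hx : Function.Injective x) :
    msDepth (x 0) ((n : ENNReal)⁻¹ • ∑ i, Measure.dirac (x i)) ≤
      1 + (1 - 1 / (n : ℝ)) * (1 - 3 / (n : ℝ)) ∧
    (msDepth (x 0) ((n : ENNReal)⁻¹ • ∑ i, Measure.dirac (x i)) =
        1 + (1 - 1 / (n : ℝ)) * (1 - 3 / (n : ℝ)) ↔
      ∀ i j : Fin n, i ≠ 0 → j ≠ 0 → i ≠ j →
        dist (x i) (x j) = dist (x i) (x 0) + dist (x 0) (x j)) := by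
  set P : Measure X := (n : ENNReal)⁻¹ • ∑ i, Measure.dirac (x i) with hP
  set N : ℝ := (n : ℝ) with hN
  have hN2 : (2 : ℝ) ≤ N := by rw [hN]; exact_mod_cast hn
  have hNpos : 0 < N := by linarith
  set t : Fin n → Fin n → ℝ := fun i j => mh (x i) (x j) (x 0) with ht
  set L : Fin n → Fin n → ℝ := fun i j =>
    if i = 0 then 0 else ((if j = 0 then 0 else (-2 : ℝ)) + (if i = j then 4 else 0)) with hL
  -- termwise comparison
  have aux : ∀ a b c : ℝ, 0 < a → 0 < b → 0 ≤ c → c ≤ a + b →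
      (-2 ≤ (a ^ 2 + b ^ 2 - c ^ 2) / (a * b) ∧
        ((-2 : ℝ) = (a ^ 2 + b ^ 2 - c ^ 2) / (a * b) ↔ c = a + b)) := by
    intro a b c ha hb hc htri
    have hab : 0 < a * b := mul_pos ha hb
    refine ⟨?_, ?_, ?_⟩
    · rw [le_div_iff₀ hab]; nlinarith
    · intro h
      have h' : a ^ 2 + b ^ 2 - c ^ 2 = -2 * (a * b) := by
        field_simp at h; linarith
      have h'' : (c - (a + b)) * (c + (a + b)) = 0 := by nlinarith
      rcases mul_eq_zero.1 h'' with h3 | h3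
      · linarith
      · linarith
    · intro h
      rw [h]; field_simp; ring
  have key : ∀ i j : Fin n, L i j ≤ t i j ∧
      (L i j = t i j ↔ (i ≠ 0 → j ≠ 0 → i ≠ j →
        dist (x i) (x j) = dist (x i) (x 0) + dist (x 0) (x j))) := by
    intro i j
    by_cases hi : i = 0
    · have h1 : t i j = 0 := by simp [ht, mh, hi]
      have h2 : L i j = 0 := by simp [hL, hi]
      refine ⟨by rw [h1, h2], ?_⟩
      rw [h1, h2]
      simp [hi]
    by_cases hj : j = 0
    · have h1 : t i j = 0 := by simp [ht, mh, hj]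
      have h2 : L i j = 0 := by
        have hij : i ≠ j := by rw [hj]; exact hi
        simp [hL, hi, hj, hij]
      refine ⟨by rw [h1, h2], ?_⟩
      rw [h1, h2]
      simp [hj]
    -- now i ≠ 0, j ≠ 0
    have hxi : x 0 ≠ x i := fun h => hi (hx h).symm
    have hxj : x 0 ≠ x j := fun h => hj (hx h).symm
    have hai : 0 < dist (x i) (x 0) := dist_pos.2 fun h => hi (hx h)
    have haj : 0 < dist (x 0) (x j) := dist_pos.2 fun h => hj (hx h).symm
    by_cases hij : i = j
    · have h1 : t i j = 2 := by
        subst hij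
        have hd : dist (x i) (x i) = 0 := dist_self _
        have hd2 : dist (x i) (x 0) ≠ 0 := hai.ne'
        simp only [ht, mh, if_neg (not_or_intro hxi hxi), hd]
        field_simp
        ring
      have h2 : L i j = 2 := by simp [hL, hi, hj, hij]; norm_num
      refine ⟨by rw [h1, h2], ?_⟩
      rw [h1, h2]
      simp [hij]
    -- main case
    have h2 : L i j = -2 := by simp [hL, hi, hj, hij]
    have h1 : t i j = (dist (x i) (x 0) ^ 2 + dist (x 0) (x j) ^ 2 - dist (x i) (x j) ^ 2) /
        (dist (x i) (x 0) * dist (x 0) (x j)) := by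
      simp only [ht, mh, if_neg (not_or_intro hxi hxj)]
      rw [dist_comm (x j) (x 0)]
    have htri : dist (x i) (x j) ≤ dist (x i) (x 0) + dist (x 0) (x j) := dist_triangle _ _ _
    obtain ⟨hle, hiff⟩ := aux _ _ _ hai haj dist_nonneg htri
    rw [h1, h2]
    refine ⟨hle, ?_⟩
    constructor
    · intro h _ _ _; exact hiff.1 h
    · intro h; exact hiff.2 (h hi hj hij)
  -- the double sum
  set S : ℝ := ∑ i, ∑ j, t i j with hS
  have hinner : ∀ i : Fin n, ∑ j, L i j = if i = 0 then 0 else (-2 * (N - 1) + 4) := by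
    intro i
    by_cases hi : i = 0
    · simp [hL, hi]
    · simp only [hL, if_neg hi]
      rw [Finset.sum_add_distrib]
      have e1 : ∑ j : Fin n, (if j = 0 then (0:ℝ) else (-2 : ℝ)) = (N - 1) * (-2) := by
        rw [Finset.sum_ite]
        simp only [Finset.sum_const, smul_eq_mul, mul_zero, zero_add]
        rw [Finset.filter_ne', Finset.card_erase_of_mem (Finset.mem_univ _)]
        simp [hN]
        push_cast [Nat.cast_sub (by omega : 1 ≤ n)]
        ring
      have e2 : ∑ j : Fin n, (if i = j then (4:ℝ) else 0) = 4 :=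
        Finset.sum_ite_eq Finset.univ i (fun _ => (4:ℝ)) |>.trans (by simp)
      rw [e1, e2]; ring
    -- end
  have hLsum : ∑ i, ∑ j, L i j = -2 * (N - 1) * (N - 3) := by
    calc ∑ i, ∑ j, L i j = ∑ i : Fin n, (if i = 0 then (0:ℝ) else (-2 * (N - 1) + 4)) :=
          Finset.sum_congr rfl fun i _ => hinner i
      _ = (N - 1) * (-2 * (N - 1) + 4) := by
          rw [Finset.sum_ite]
          simp only [Finset.sum_const, smul_eq_mul, mul_zero, zero_add]
          rw [Finset.filter_ne', Finset.card_erase_of_mem (Finset.mem_univ _)]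
          simp [hN]
          push_cast [Nat.cast_sub (by omega : 1 ≤ n)]
          ring
      _ = -2 * (N - 1) * (N - 3) := by ring
  have hSge : -2 * (N - 1) * (N - 3) ≤ S := by
    rw [← hLsum]
    exact Finset.sum_le_sum fun i _ => Finset.sum_le_sum fun j _ => (key i j).1
  have hSiff : (S = -2 * (N - 1) * (N - 3)) ↔
      ∀ i j : Fin n, i ≠ 0 → j ≠ 0 → i ≠ j →
        dist (x i) (x j) = dist (x i) (x 0) + dist (x 0) (x j) := by
    rw [← hLsum, hS]
    rw [eq_comm, Finset.sum_eq_sum_iff_of_le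
      (fun i _ => Finset.sum_le_sum fun j _ => (key i j).1)]
    constructor
    · intro h i j hi hj hij
      have := (Finset.sum_eq_sum_iff_of_le (fun j _ => (key i j).1)).1
        (h i (Finset.mem_univ i)) j (Finset.mem_univ j)
      exact (key i j).2.1 this hi hj hij
    · intro h i _
      refine Finset.sum_congr rfl fun j _ => ?_
      by_cases hi : i = 0
      · exact (key i j).2.2 (fun h' => absurd hi h')
      by_cases hj : j = 0
      · exact (key i j).2.2 (fun _ h' => absurd hj h')
      by_cases hij : i = j
      · exact (key i j).2.2 (fun _ _ h' => absurd hij h')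
      · exact (key i j).2.2 (fun _ _ _ => h i j hi hj hij)
  -- compute the depth
  have hdepth : msDepth (x 0) P = 1 - (1 / 2) * (N⁻¹ * (N⁻¹ * S)) := by
    rw [msDepth, hP,
      integral_uniform_aux x (fun x₁ => ∫ x₂, mh x₁ x₂ (x 0) ∂((n : ENNReal)⁻¹ • ∑ i, Measure.dirac (x i)))]
    have h2 : ∑ i, (∫ x₂, mh (x i) x₂ (x 0) ∂((n : ENNReal)⁻¹ • ∑ i, Measure.dirac (x i)))
        = N⁻¹ * S := by
      rw [hS, Finset.mul_sum]
      exact Finset.sum_congr rfl fun i _ => integral_uniform_aux x (fun x₂ => mh (x i) x₂ (x 0))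
    rw [h2]
  have htar : 1 + (1 - 1 / N) * (1 - 3 / N) =
      1 - (1 / 2) * (N⁻¹ * (N⁻¹ * (-2 * (N - 1) * (N - 3)))) := by
    field_simp
    ring
  constructor
  · rw [hdepth, htar]
    have h1 : N⁻¹ * (N⁻¹ * (-2 * (N - 1) * (N - 3))) ≤ N⁻¹ * (N⁻¹ * S) := by
      have hNi : 0 ≤ N⁻¹ := inv_nonneg.2 hNpos.le
      exact mul_le_mul_of_nonneg_left (mul_le_mul_of_nonneg_left hSge hNi) hNi
    linarith
  · rw [hdepth, htar, ← hSiff]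
    constructor
    · intro h
      have h' : N⁻¹ * (N⁻¹ * S) = N⁻¹ * (N⁻¹ * (-2 * (N - 1) * (N - 3))) := by linarith
      have hNne : N⁻¹ ≠ 0 := inv_ne_zero hNpos.ne'
      exact mul_left_cancel₀ hNne (mul_left_cancel₀ hNne h')
    · intro h; rw [h]
end

section
/- Fix an integer k ≥ 1 and set n = 2k. Equip the cyclic group Z/nZ with the cyclic metric d(i, j) := min(|i − j|, n − |i − j|) (representatives taken in {0, …, n − 1}), and let P be the uniform probability measure on Z/nZ. Then the metric spatial depth of the point 0 equals D(0; P) = −1 + 1/k − 1/(4k²) + Σ_{j=1}^{k} 1/j². -/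
open scoped Classical

/-- The kernel of the metric spatial depth, for a general distance function `d`. -/
noncomputable def mhGen {X : Type*} (d : X → X → ℝ) (x₁ x₂ x₃ : X) : ℝ :=
  if x₃ = x₁ ∨ x₃ = x₂ then 0
  else (d x₁ x₃ ^ 2 + d x₂ x₃ ^ 2 - d x₁ x₂ ^ 2) / (d x₁ x₃ * d x₂ x₃)

/-- The cyclic metric on `ZMod n`. -/
noncomputable def cycDist {n : ℕ} [NeZero n] (i j : ZMod n) : ℝ :=
  (min ((i - j).val) (n - (i - j).val) : ℕ)


lemma cyc_val {n : ℕ} [NeZero n] (m : ℤ) (h1 : -(n:ℤ) < m) (h2 : m < n)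
    (i j : ZMod n) (hij : i - j = (m : ZMod n)) :
    cycDist i j = ((min |m| ((n:ℤ) - |m|) : ℤ) : ℝ) := by
  have hvn : (((m : ZMod n)).val : ℤ) = m % n := ZMod.val_intCast m
  have hlt : ((m : ZMod n)).val < n := ZMod.val_lt _
  unfold cycDist
  rw [hij]
  have hmod : m % (n:ℤ) = if 0 ≤ m then m else m + n := by
    split_ifs with h
    · exact Int.emod_eq_of_lt h h2
    · have : (m + n) % n = m % n := by
        have := Int.add_mul_emod_self_left (a := m) (b := (n:ℤ)) (c := 1)
        simpa using this
      rw [← this]; exact Int.emod_eq_of_lt (by omega) (by omega)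
  set v := ((m : ZMod n)).val with hv
  have hveq : (v : ℤ) = if 0 ≤ m then m else m + n := by rw [hvn, hmod]
  have : ((min v (n - v) : ℕ) : ℤ) = min |m| ((n:ℤ) - |m|) := by
    rcases le_or_gt 0 m with h | h
    · simp only [if_pos h] at hveq
      rw [abs_of_nonneg h]; push_cast; omega
    · simp only [if_neg (not_le.mpr h)] at hveq
      rw [abs_of_neg h]; push_cast; omega
  exact_mod_cast congrArg (fun z : ℤ => (z : ℝ)) this

section
variable {k n : ℕ} (hk : 1 ≤ k) (hn : n = 2 * k) [NeZero n]

include hk hn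

lemma zmod_ne {s : ℤ} (hs1 : 1 ≤ s) (hs2 : s ≤ k) : (0 : ZMod n) ≠ (s : ZMod n) := by
  intro h
  have h' : ((s : ZMod n)) = 0 := h.symm
  rw [ZMod.intCast_zmod_eq_zero_iff_dvd] at h'
  have := Int.le_of_dvd (by omega) h'
  omega

lemma zmod_ne' {s : ℤ} (hs1 : 1 ≤ s) (hs2 : s ≤ k) : (0 : ZMod n) ≠ ((-s : ℤ) : ZMod n) := by
  intro h
  have h' : (((-s : ℤ) : ZMod n)) = 0 := h.symm
  rw [ZMod.intCast_zmod_eq_zero_iff_dvd] at h'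
  have := Int.le_of_dvd (by omega) ((dvd_neg).mp h')
  omega

lemma cyc_pos {s : ℤ} (hs1 : 1 ≤ s) (hs2 : s ≤ k) : cycDist ((s : ZMod n)) 0 = (s:ℝ) := by
  have h := cyc_val (n := n) s (by omega) (by omega) ((s:ZMod n)) 0 (by push_cast; ring)
  rw [h]
  have : min |s| ((n:ℤ) - |s|) = s := by
    rw [abs_of_nonneg (by omega : (0:ℤ) ≤ s)]; omega
  rw [this]

lemma cyc_neg {s : ℤ} (hs1 : 1 ≤ s) (hs2 : s ≤ k) : cycDist (((-s : ℤ) : ZMod n)) 0 = (s:ℝ) := by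
  have h := cyc_val (n := n) (-s) (by omega) (by omega) (((-s:ℤ):ZMod n)) 0 (by push_cast; ring)
  rw [h]
  have : min |(-s)| ((n:ℤ) - |(-s)|) = s := by
    rw [abs_neg, abs_of_nonneg (by omega : (0:ℤ) ≤ s)]; omega
  rw [this]

lemma mh_pp {s t : ℤ} (hs1 : 1 ≤ s) (hs2 : s ≤ k) (ht1 : 1 ≤ t) (ht2 : t ≤ k) :
    mhGen cycDist ((s : ZMod n)) ((t : ZMod n)) 0 = 2 := by
  have d1 := cyc_pos hk hn hs1 hs2
  have d2 := cyc_pos hk hn ht1 ht2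
  have d3 : cycDist ((s:ZMod n)) ((t:ZMod n)) = ((|s - t| : ℤ) : ℝ) := by
    have h := cyc_val (n := n) (s - t) (by omega) (by omega) ((s:ZMod n)) ((t:ZMod n))
      (by push_cast; ring)
    rw [h]
    have : min |s - t| ((n:ℤ) - |s - t|) = |s - t| := by
      rcases abs_cases (s - t) with ⟨h1, _⟩ | ⟨h1, _⟩ <;> omega
    rw [this]
  unfold mhGen
  rw [if_neg (by push_neg; exact ⟨zmod_ne hk hn hs1 hs2, zmod_ne hk hn ht1 ht2⟩), d1, d2, d3]
  have hsR : (s:ℝ) ≠ 0 := by exact_mod_cast (by omega : s ≠ 0)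
  have htR : (t:ℝ) ≠ 0 := by exact_mod_cast (by omega : t ≠ 0)
  have habs : ((|s - t| : ℤ) : ℝ)^2 = ((s:ℝ) - t)^2 := by push_cast [sq_abs]; ring
  rw [habs]
  field_simp
  ring

lemma mh_nn {s t : ℤ} (hs1 : 1 ≤ s) (hs2 : s ≤ k) (ht1 : 1 ≤ t) (ht2 : t ≤ k) :
    mhGen cycDist (((-s : ℤ) : ZMod n)) (((-t : ℤ) : ZMod n)) 0 = 2 := by
  have d1 := cyc_neg hk hn hs1 hs2
  have d2 := cyc_neg hk hn ht1 ht2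
  have d3 : cycDist (((-s:ℤ):ZMod n)) (((-t:ℤ):ZMod n)) = ((|s - t| : ℤ) : ℝ) := by
    have h := cyc_val (n := n) (t - s) (by omega) (by omega) (((-s:ℤ):ZMod n)) (((-t:ℤ):ZMod n))
      (by push_cast; ring)
    rw [h]
    have : min |t - s| ((n:ℤ) - |t - s|) = |s - t| := by
      rcases abs_cases (s - t) with ⟨h1, _⟩ | ⟨h1, _⟩ <;>
      rcases abs_cases (t - s) with ⟨h2, _⟩ | ⟨h2, _⟩ <;> omega
    rw [this]
  unfold mhGen
  rw [if_neg (by push_neg; exact ⟨zmod_ne' hk hn hs1 hs2, zmod_ne' hk hn ht1 ht2⟩), d1, d2, d3]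
  have hsR : (s:ℝ) ≠ 0 := by exact_mod_cast (by omega : s ≠ 0)
  have htR : (t:ℝ) ≠ 0 := by exact_mod_cast (by omega : t ≠ 0)
  have habs : ((|s - t| : ℤ) : ℝ)^2 = ((s:ℝ) - t)^2 := by push_cast [sq_abs]; ring
  rw [habs]
  field_simp
  ring

lemma mh_pn {s u : ℤ} (hs1 : 1 ≤ s) (hs2 : s ≤ k) (hu1 : 1 ≤ u) (hu2 : u ≤ (k:ℤ) - 1) :
    mhGen cycDist ((s : ZMod n)) (((-u : ℤ) : ZMod n)) 0 =
      -2 + (if (k:ℤ) < s + u then 4*(k:ℝ)*((s:ℝ)+u-k)/((s:ℝ)*u) else 0) := by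
  have d1 := cyc_pos hk hn hs1 hs2
  have d2 := cyc_neg hk hn hu1 (by omega)
  have hsR : (s:ℝ) ≠ 0 := by exact_mod_cast (by omega : s ≠ 0)
  have huR : (u:ℝ) ≠ 0 := by exact_mod_cast (by omega : u ≠ 0)
  have hcond : ¬ ((0:ZMod n) = (s:ZMod n) ∨ (0:ZMod n) = ((-u:ℤ):ZMod n)) := by
    push_neg; exact ⟨zmod_ne hk hn hs1 hs2, zmod_ne' hk hn hu1 (by omega)⟩
  rcases le_or_gt (s + u) (k:ℤ) with hc | hc
  · have d3 : cycDist ((s:ZMod n)) (((-u:ℤ):ZMod n)) = ((s:ℝ) + u) := by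
      have h := cyc_val (n := n) (s + u) (by omega) (by omega) ((s:ZMod n)) (((-u:ℤ):ZMod n))
        (by push_cast; ring)
      rw [h]
      have : min |s + u| ((n:ℤ) - |s + u|) = s + u := by
        rw [abs_of_nonneg (by omega : (0:ℤ) ≤ s + u)]; omega
      rw [this]; push_cast; ring
    unfold mhGen
    rw [if_neg hcond, if_neg (by omega), d1, d2, d3]
    field_simp
    ring
  · have d3 : cycDist ((s:ZMod n)) (((-u:ℤ):ZMod n)) = 2*(k:ℝ) - ((s:ℝ) + u) := by
      have h := cyc_val (n := n) (s + u) (by omega) (by omega) ((s:ZMod n)) (((-u:ℤ):ZMod n))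
        (by push_cast; ring)
      rw [h]
      have : min |s + u| ((n:ℤ) - |s + u|) = 2*(k:ℤ) - (s + u) := by
        rw [abs_of_nonneg (by omega : (0:ℤ) ≤ s + u)]; omega
      rw [this]; push_cast; ring
    unfold mhGen
    rw [if_neg hcond, if_pos (by omega), d1, d2, d3]
    field_simp
    ring

lemma mh_np {s u : ℤ} (hs1 : 1 ≤ s) (hs2 : s ≤ k) (hu1 : 1 ≤ u) (hu2 : u ≤ (k:ℤ) - 1) :
    mhGen cycDist (((-u : ℤ) : ZMod n)) ((s : ZMod n)) 0 =
      -2 + (if (k:ℤ) < s + u then 4*(k:ℝ)*((s:ℝ)+u-k)/((s:ℝ)*u) else 0) := by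
  have d1 := cyc_pos hk hn hs1 hs2
  have d2 := cyc_neg hk hn hu1 (by omega)
  have hsR : (s:ℝ) ≠ 0 := by exact_mod_cast (by omega : s ≠ 0)
  have huR : (u:ℝ) ≠ 0 := by exact_mod_cast (by omega : u ≠ 0)
  have hcond : ¬ ((0:ZMod n) = ((-u:ℤ):ZMod n) ∨ (0:ZMod n) = (s:ZMod n)) := by
    push_neg; exact ⟨zmod_ne' hk hn hu1 (by omega), zmod_ne hk hn hs1 hs2⟩
  rcases le_or_gt (s + u) (k:ℤ) with hc | hc
  · have d3 : cycDist (((-u:ℤ):ZMod n)) ((s:ZMod n)) = ((s:ℝ) + u) := by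
      have h := cyc_val (n := n) (-(s + u)) (by omega) (by omega) (((-u:ℤ):ZMod n)) ((s:ZMod n))
        (by push_cast; ring)
      rw [h]
      have : min |(-(s + u))| ((n:ℤ) - |(-(s+u))|) = s + u := by
        rw [abs_neg, abs_of_nonneg (by omega : (0:ℤ) ≤ s + u)]; omega
      rw [this]; push_cast; ring
    unfold mhGen
    rw [if_neg hcond, if_neg (by omega), d1, d2, d3]
    field_simp
    ring
  · have d3 : cycDist (((-u:ℤ):ZMod n)) ((s:ZMod n)) = 2*(k:ℝ) - ((s:ℝ) + u) := by
      have h := cyc_val (n := n) (-(s + u)) (by omega) (by omega) (((-u:ℤ):ZMod n)) ((s:ZMod n))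
        (by push_cast; ring)
      rw [h]
      have : min |(-(s + u))| ((n:ℤ) - |(-(s+u))|) = 2*(k:ℤ) - (s + u) := by
        rw [abs_neg, abs_of_nonneg (by omega : (0:ℤ) ≤ s + u)]; omega
      rw [this]; push_cast; ring
    unfold mhGen
    rw [if_neg hcond, if_pos (by omega), d1, d2, d3]
    field_simp
    ring

end

lemma sum_pos_part' (k : ℕ) (F : ℤ → ℝ) :
    ∑ s ∈ Finset.Ioc (0:ℤ) k, F s = ∑ u ∈ Finset.Icc 1 k, F ((u:ℤ)) := by
  apply Finset.sum_bij' (i := fun (s:ℤ) _ => s.toNat) (j := fun (u:ℕ) _ => (u:ℤ))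
  · intro s hs; simp only [Finset.mem_Ioc] at hs; simp only [Finset.mem_Icc]; omega
  · intro u hu; simp only [Finset.mem_Icc] at hu; simp only [Finset.mem_Ioc]; omega
  · intro s hs; simp only [Finset.mem_Ioc] at hs; omega
  · intro u hu; simp
  · intro s hs; simp only [Finset.mem_Ioc] at hs; congr 1; omega

lemma sum_neg_part' (k : ℕ) (hk : 1 ≤ k) (F : ℤ → ℝ) :
    ∑ s ∈ Finset.Ioc (-(k:ℤ)) 0, F s = F 0 + ∑ u ∈ Finset.Icc 1 (k-1), F (-(u:ℤ)) := by
  have hsplit : Finset.Ioc (-(k:ℤ)) 0 = insert 0 (Finset.Ioc (-(k:ℤ)) (-1)) := by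
    ext x; simp only [Finset.mem_Ioc, Finset.mem_insert]; omega
  rw [hsplit, Finset.sum_insert (by simp)]
  congr 1
  apply Finset.sum_bij' (i := fun (s:ℤ) _ => (-s).toNat) (j := fun (u:ℕ) _ => -(u:ℤ))
  · intro s hs; simp only [Finset.mem_Ioc] at hs; simp only [Finset.mem_Icc]; omega
  · intro u hu; simp only [Finset.mem_Icc] at hu; simp only [Finset.mem_Ioc]; omega
  · intro s hs; simp only [Finset.mem_Ioc] at hs; omega
  · intro u hu; simp only [Finset.mem_Icc] at hu; omega
  · intro s hs; simp only [Finset.mem_Ioc] at hs; congr 1; omega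

lemma sum_zmod' {k n : ℕ} [NeZero n] (hn : n = 2 * k) (F : ZMod n → ℝ) :
    ∑ i : ZMod n, F i = ∑ s ∈ Finset.Ioc (-(k:ℤ)) k, F ((s : ZMod n)) := by
  have hk0 : 0 < n := Nat.pos_of_ne_zero (NeZero.ne n)
  symm
  apply Finset.sum_bij' (i := fun (s : ℤ) _ => ((s : ZMod n)))
    (j := fun (i : ZMod n) _ => if (i.val : ℤ) ≤ k then (i.val : ℤ) else (i.val : ℤ) - n)
  · intro s hs; exact Finset.mem_univ _
  · intro i _
    have hlt : i.val < n := ZMod.val_lt i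
    simp only [Finset.mem_Ioc]
    split_ifs with h <;> omega
  · intro s hs
    simp only [Finset.mem_Ioc] at hs
    have hvn : (((s : ZMod n)).val : ℤ) = s % n := ZMod.val_intCast s
    have hmod : s % (n:ℤ) = if 0 ≤ s then s else s + n := by
      split_ifs with h
      · exact Int.emod_eq_of_lt h (by omega)
      · have h2 : (s + n) % n = s % n := by
          have := Int.add_mul_emod_self_left (a := s) (b := (n:ℤ)) (c := 1)
          simpa using this
        rw [← h2]; exact Int.emod_eq_of_lt (by omega) (by omega)
    rw [hvn, hmod]
    split_ifs with h h1 h2 <;> omega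
  · intro i _
    split_ifs with h
    · push_cast
      simp [ZMod.natCast_val, ZMod.cast_id]
    · push_cast
      simp [ZMod.natCast_val, ZMod.cast_id, ZMod.natCast_self]
  · intro s hs; rfl


lemma filter_card (k s : ℕ) (hs1 : 1 ≤ s) (hs2 : s ≤ k) :
    ((Finset.Icc 1 k).filter (fun u => k < s + u)).card = s := by
  have : (Finset.Icc 1 k).filter (fun u => k < s + u) = Finset.Icc (k + 1 - s) k := by
    ext u; simp only [Finset.mem_filter, Finset.mem_Icc]; omega
  rw [this, Nat.card_Icc]; omega

lemma row_A (k s : ℕ) (hs1 : 1 ≤ s) (hs2 : s ≤ k) :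
    ∑ u ∈ Finset.Icc 1 k, (if k < s + u then (1:ℝ)/s else 0) = 1 := by
  rw [← Finset.sum_filter, Finset.sum_const, filter_card k s hs1 hs2]
  have : (s:ℝ) ≠ 0 := Nat.cast_ne_zero.mpr (by omega)
  simp [nsmul_eq_mul]
  field_simp

lemma refl_sum (k : ℕ) :
    ∑ s ∈ Finset.Icc 1 k, (1:ℝ)/((k + 1 - s : ℕ)) = ∑ s ∈ Finset.Icc 1 k, (1:ℝ)/s := by
  apply Finset.sum_nbij' (i := fun s => k + 1 - s) (j := fun s => k + 1 - s)
  · intro s hs; simp only [Finset.mem_Icc] at *; omega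
  · intro s hs; simp only [Finset.mem_Icc] at *; omega
  · intro s hs; simp only [Finset.mem_Icc] at hs; omega
  · intro s hs; simp only [Finset.mem_Icc] at hs; omega
  · intro s hs; rfl

lemma pf_sum (k : ℕ) :
    ∑ s ∈ Finset.Icc 1 k, (1:ℝ)/((s:ℝ)*((k + 1 - s : ℕ))) =
      2/((k:ℝ)+1) * ∑ s ∈ Finset.Icc 1 k, (1:ℝ)/s := by
  have step : ∀ s ∈ Finset.Icc 1 k, (1:ℝ)/((s:ℝ)*((k + 1 - s : ℕ))) =
      1/((k:ℝ)+1) * (1/s + 1/((k + 1 - s : ℕ))) := by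
    intro s hs
    simp only [Finset.mem_Icc] at hs
    have h1 : ((k + 1 - s : ℕ) : ℝ) = (k:ℝ) + 1 - s := by
      push_cast [Nat.cast_sub (by omega : s ≤ k + 1)]; ring
    have hs0 : (s:ℝ) ≠ 0 := Nat.cast_ne_zero.mpr (by omega)
    have h2 : ((k:ℝ) + 1 - s) ≠ 0 := by
      rw [← h1]; exact Nat.cast_ne_zero.mpr (by omega)
    have h3 : ((k:ℝ) + 1) ≠ 0 := by positivity
    rw [h1]
    field_simp
    ring

  rw [Finset.sum_congr rfl step, ← Finset.mul_sum, Finset.sum_add_distrib, refl_sum]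
  ring


-- key induction: the triangular double harmonic sum
lemma T_lem (k : ℕ) :
    ∑ s ∈ Finset.Icc 1 k, ∑ u ∈ Finset.Icc 1 k,
        (if k < s + u then (1:ℝ)/((s:ℝ)*u) else 0) =
      ∑ j ∈ Finset.Icc 1 k, (1:ℝ)/(j:ℝ)^2 := by
  induction k with
  | zero => simp
  | succ k ih =>
    have hk1 : ((k:ℝ)+1) ≠ 0 := by positivity
    set H := ∑ j ∈ Finset.Icc 1 k, (1:ℝ)/j with hH
    rw [Finset.sum_Icc_succ_top (by omega : 1 ≤ k + 1),
        Finset.sum_Icc_succ_top (by omega : 1 ≤ k + 1) (fun j => (1:ℝ)/(j:ℝ)^2)]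
    have h_top : ∑ u ∈ Finset.Icc 1 (k+1),
        (if k + 1 < (k+1) + u then (1:ℝ)/((((k+1:ℕ)):ℝ)*(u:ℝ)) else 0)
          = 1/((k:ℝ)+1) * H + 1/((k:ℝ)+1)^2 := by
      have : ∀ u ∈ Finset.Icc 1 (k+1),
          (if k + 1 < (k+1) + u then (1:ℝ)/((((k+1:ℕ)):ℝ)*(u:ℝ)) else 0)
            = 1/((k:ℝ)+1) * (1/(u:ℝ)) := by
        intro u hu
        simp only [Finset.mem_Icc] at hu
        rw [if_pos (by omega)]
        have hu0 : (u:ℝ) ≠ 0 := Nat.cast_ne_zero.mpr (by omega)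
        push_cast
        field_simp
      rw [Finset.sum_congr rfl this, ← Finset.mul_sum,
          Finset.sum_Icc_succ_top (by omega : 1 ≤ k + 1) (fun u => (1:ℝ)/(u:ℝ)), ← hH]
      push_cast
      field_simp
    have h_inner : ∀ s ∈ Finset.Icc 1 k,
        ∑ u ∈ Finset.Icc 1 (k+1), (if k + 1 < s + u then (1:ℝ)/((s:ℝ)*u) else 0)
          = (∑ u ∈ Finset.Icc 1 k, (if k + 1 < s + u then (1:ℝ)/((s:ℝ)*u) else 0))
            + 1/((s:ℝ)*((k:ℝ)+1)) := by
      intro s hs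
      simp only [Finset.mem_Icc] at hs
      rw [Finset.sum_Icc_succ_top (by omega : 1 ≤ k + 1)
        (fun u => if k + 1 < s + u then (1:ℝ)/((s:ℝ)*u) else 0)]
      rw [if_pos (by omega)]
      push_cast
      ring
    have h_diag : ∀ s ∈ Finset.Icc 1 k,
        ∑ u ∈ Finset.Icc 1 k, (if k < s + u then (1:ℝ)/((s:ℝ)*u) else 0)
          = (∑ u ∈ Finset.Icc 1 k, (if k + 1 < s + u then (1:ℝ)/((s:ℝ)*u) else 0))
            + (1:ℝ)/((s:ℝ)*((k + 1 - s : ℕ):ℝ)) := by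
      intro s hs
      simp only [Finset.mem_Icc] at hs
      have hpt : ∀ u ∈ Finset.Icc 1 k,
          (if k < s + u then (1:ℝ)/((s:ℝ)*u) else 0)
            = (if k + 1 < s + u then (1:ℝ)/((s:ℝ)*u) else 0)
              + (if u = k + 1 - s then (1:ℝ)/((s:ℝ)*u) else 0) := by
        intro u hu
        simp only [Finset.mem_Icc] at hu
        split_ifs with h1 h2 h3 h2 h3 <;> first | ring1 | (exfalso; omega)
      rw [Finset.sum_congr rfl hpt, Finset.sum_add_distrib]
      congr 1
      rw [Finset.sum_ite_eq' (Finset.Icc 1 k) (k + 1 - s) (fun u => (1:ℝ)/((s:ℝ)*u)),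
        if_pos (by simp only [Finset.mem_Icc]; omega)]
    rw [Finset.sum_congr rfl h_inner, Finset.sum_add_distrib, h_top]
    have hswap : ∑ s ∈ Finset.Icc 1 k,
        ∑ u ∈ Finset.Icc 1 k, (if k + 1 < s + u then (1:ℝ)/((s:ℝ)*u) else 0)
          = (∑ j ∈ Finset.Icc 1 k, (1:ℝ)/(j:ℝ)^2) - 2/((k:ℝ)+1) * H := by
      have := Finset.sum_congr rfl h_diag
      rw [ih, Finset.sum_add_distrib, pf_sum k, ← hH] at this
      linarith
    rw [hswap]
    have hlast : ∑ s ∈ Finset.Icc 1 k, (1:ℝ)/((s:ℝ)*((k:ℝ)+1))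
        = 1/((k:ℝ)+1) * H := by
      rw [hH, Finset.mul_sum]
      apply Finset.sum_congr rfl
      intro s hs
      simp only [Finset.mem_Icc] at hs
      have hs0 : (s:ℝ) ≠ 0 := Nat.cast_ne_zero.mpr (by omega)
      field_simp
    rw [hlast]
    push_cast
    ring

lemma E_lem (k : ℕ) :
    ∑ s ∈ Finset.Icc 1 k, ∑ u ∈ Finset.Icc 1 k,
        (if k < s + u then ((s:ℝ)+(u:ℝ)-(k:ℝ))/((s:ℝ)*(u:ℝ)) else 0)
      = 2*(k:ℝ) - (k:ℝ) * ∑ j ∈ Finset.Icc 1 k, (1:ℝ)/(j:ℝ)^2 := by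
  have hpt : ∀ s ∈ Finset.Icc 1 k, ∀ u ∈ Finset.Icc 1 k,
      (if k < s + u then ((s:ℝ)+(u:ℝ)-(k:ℝ))/((s:ℝ)*(u:ℝ)) else 0)
        = (if k < s + u then (1:ℝ)/s else 0) + (if k < s + u then (1:ℝ)/u else 0)
          - (k:ℝ)*(if k < s + u then (1:ℝ)/((s:ℝ)*u) else 0) := by
    intro s hs u hu
    simp only [Finset.mem_Icc] at hs hu
    have hs0 : (s:ℝ) ≠ 0 := Nat.cast_ne_zero.mpr (by omega)
    have hu0 : (u:ℝ) ≠ 0 := Nat.cast_ne_zero.mpr (by omega)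
    split_ifs with h
    · field_simp; ring
    · ring
  rw [Finset.sum_congr rfl (fun s hs => Finset.sum_congr rfl (fun u hu => hpt s hs u hu))]
  have hsplit : ∀ s ∈ Finset.Icc 1 k,
      ∑ u ∈ Finset.Icc 1 k,
        ((if k < s + u then (1:ℝ)/s else 0) + (if k < s + u then (1:ℝ)/u else 0)
          - (k:ℝ)*(if k < s + u then (1:ℝ)/((s:ℝ)*u) else 0))
      = (∑ u ∈ Finset.Icc 1 k, (if k < s + u then (1:ℝ)/s else 0))
        + (∑ u ∈ Finset.Icc 1 k, (if k < s + u then (1:ℝ)/u else 0))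
        - (k:ℝ) * (∑ u ∈ Finset.Icc 1 k, (if k < s + u then (1:ℝ)/((s:ℝ)*u) else 0)) := by
    intro s hs
    rw [Finset.sum_sub_distrib, Finset.sum_add_distrib, ← Finset.mul_sum]
  rw [Finset.sum_congr rfl hsplit, Finset.sum_sub_distrib, Finset.sum_add_distrib,
    ← Finset.mul_sum]
  have hA : ∑ s ∈ Finset.Icc 1 k, ∑ u ∈ Finset.Icc 1 k, (if k < s + u then (1:ℝ)/s else 0)
      = (k:ℝ) := by
    rw [Finset.sum_congr rfl (fun s hs => row_A k s (Finset.mem_Icc.mp hs).1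
      (Finset.mem_Icc.mp hs).2)]
    simp [Nat.card_Icc]
  have hB : ∑ s ∈ Finset.Icc 1 k, ∑ u ∈ Finset.Icc 1 k, (if k < s + u then (1:ℝ)/u else 0)
      = (k:ℝ) := by
    rw [Finset.sum_comm]
    have : ∀ u ∈ Finset.Icc 1 k, ∑ s ∈ Finset.Icc 1 k, (if k < s + u then (1:ℝ)/u else 0)
        = 1 := by
      intro u hu
      have : ∀ s ∈ Finset.Icc 1 k, (if k < s + u then (1:ℝ)/u else 0)
          = (if k < u + s then (1:ℝ)/u else 0) := by
        intro s hs; rw [Nat.add_comm]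
      rw [Finset.sum_congr rfl this]
      exact row_A k u (Finset.mem_Icc.mp hu).1 (Finset.mem_Icc.mp hu).2
    rw [Finset.sum_congr rfl this]
    simp [Nat.card_Icc]
  rw [hA, hB, T_lem k]
  ring

lemma M_lem (k : ℕ) (hk : 1 ≤ k) :
    ∑ s ∈ Finset.Icc 1 k, ∑ u ∈ Finset.Icc 1 (k-1),
        (if k < s + u then ((s:ℝ)+(u:ℝ)-(k:ℝ))/((s:ℝ)*(u:ℝ)) else 0)
      = 2*(k:ℝ) - 1 - (k:ℝ) * ∑ j ∈ Finset.Icc 1 k, (1:ℝ)/(j:ℝ)^2 := by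
  obtain ⟨m, rfl⟩ : ∃ m, k = m + 1 := ⟨k - 1, by omega⟩
  have hm : m + 1 - 1 = m := by omega
  rw [hm]
  have hpeel : ∀ s ∈ Finset.Icc 1 (m+1),
      ∑ u ∈ Finset.Icc 1 (m+1),
          (if m+1 < s + u then ((s:ℝ)+(u:ℝ)-((m:ℝ)+1))/((s:ℝ)*(u:ℝ)) else 0)
        = (∑ u ∈ Finset.Icc 1 m,
            (if m+1 < s + u then ((s:ℝ)+(u:ℝ)-((m:ℝ)+1))/((s:ℝ)*(u:ℝ)) else 0))
          + 1/((m:ℝ)+1) := by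
    intro s hs
    simp only [Finset.mem_Icc] at hs
    have hs0 : (s:ℝ) ≠ 0 := Nat.cast_ne_zero.mpr (by omega)
    rw [Finset.sum_Icc_succ_top (by omega : 1 ≤ m + 1)
      (fun u => if m+1 < s + u then ((s:ℝ)+(u:ℝ)-((m:ℝ)+1))/((s:ℝ)*(u:ℝ)) else 0)]
    rw [if_pos (by omega)]
    have hm1 : ((m:ℝ)+1) ≠ 0 := by positivity
    push_cast
    congr 1
    field_simp
    ring
  have hE := E_lem (m+1)
  have hcast : ∀ s u : ℕ, (if m+1 < s + u then ((s:ℝ)+(u:ℝ)-((m+1:ℕ):ℝ))/((s:ℝ)*(u:ℝ)) else 0)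
      = (if m+1 < s + u then ((s:ℝ)+(u:ℝ)-((m:ℝ)+1))/((s:ℝ)*(u:ℝ)) else 0) := by
    intro s u; push_cast; ring_nf
  simp only [hcast] at hE
  rw [Finset.sum_congr rfl hpeel, Finset.sum_add_distrib, Finset.sum_const, Nat.card_Icc] at hE
  have hm1 : ((m:ℝ)+1) ≠ 0 := by positivity
  have : (m + 1 + 1 - 1) • ((1:ℝ)/((m:ℝ)+1)) = 1 := by
    simp only [Nat.add_sub_cancel, nsmul_eq_mul]
    push_cast
    field_simp
  rw [this] at hE
  push_cast at hE ⊢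
  linarith


theorem msDepth_cycle (k n : ℕ) (hk : 1 ≤ k) (hn : n = 2 * k) [NeZero n] :
    1 - (1 / (2 * (n : ℝ) ^ 2)) * ∑ i : ZMod n, ∑ j : ZMod n, mhGen cycDist i j 0 =
      -1 + 1 / (k : ℝ) - 1 / (4 * (k : ℝ) ^ 2) + ∑ j ∈ Finset.Icc 1 k, 1 / (j : ℝ) ^ 2 := by
  classical
  have hkR : ((k:ℝ)) ≠ 0 := Nat.cast_ne_zero.mpr (by omega)
  set g : ℤ → ℤ → ℝ := fun s t => mhGen cycDist ((s : ZMod n)) ((t : ZMod n)) 0 with hg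
  set H : ℝ := ∑ j ∈ Finset.Icc 1 k, 1 / (j : ℝ) ^ 2 with hH
  -- Step 1: reindex both sums
  have step1 : ∑ i : ZMod n, ∑ j : ZMod n, mhGen cycDist i j 0
      = ∑ s ∈ Finset.Ioc (-(k:ℤ)) k, ∑ t ∈ Finset.Ioc (-(k:ℤ)) k, g s t := by
    rw [sum_zmod' hn]
    exact Finset.sum_congr rfl (fun s _ => sum_zmod' hn _)
  -- splitting a sum over Ioc (-k) k
  have sum_split : ∀ F : ℤ → ℝ, ∑ s ∈ Finset.Ioc (-(k:ℤ)) k, F s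
      = F 0 + ∑ u ∈ Finset.Icc 1 (k-1), F (-(u:ℤ)) + ∑ u ∈ Finset.Icc 1 k, F ((u:ℤ)) := by
    intro F
    rw [← Finset.Ioc_union_Ioc_eq_Ioc (by omega : -((k:ℕ):ℤ) ≤ 0) (by exact_mod_cast Nat.zero_le k),
      Finset.sum_union (by
        rw [Finset.disjoint_left]
        intro a ha hb
        simp only [Finset.mem_Ioc] at ha hb
        omega),
      sum_neg_part' k hk F, sum_pos_part' k F]
  -- zero rows and columns
  have g0t : ∀ t : ℤ, g 0 t = 0 := by
    intro t
    simp only [hg]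
    unfold mhGen
    rw [if_pos (Or.inl (by push_cast; rfl))]
  have gs0 : ∀ s : ℤ, g s 0 = 0 := by
    intro s
    simp only [hg]
    unfold mhGen
    rw [if_pos (Or.inr (by push_cast; rfl))]
  -- quadrant values
  have qpp : ∀ s ∈ Finset.Icc 1 k, ∀ t ∈ Finset.Icc 1 k, g ((s:ℤ)) ((t:ℤ)) = 2 := by
    intro s hs t ht
    simp only [Finset.mem_Icc] at hs ht
    exact mh_pp hk hn (by omega) (by omega) (by omega) (by omega)
  have qnn : ∀ u ∈ Finset.Icc 1 (k-1), ∀ v ∈ Finset.Icc 1 (k-1),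
      g (-(u:ℤ)) (-(v:ℤ)) = 2 := by
    intro u hu v hv
    simp only [Finset.mem_Icc] at hu hv
    exact mh_nn hk hn (by omega) (by omega) (by omega) (by omega)
  have qpn : ∀ s ∈ Finset.Icc 1 k, ∀ v ∈ Finset.Icc 1 (k-1),
      g ((s:ℤ)) (-(v:ℤ)) = -2 + 4*(k:ℝ) *
        (if k < s + v then ((s:ℝ)+(v:ℝ)-(k:ℝ))/((s:ℝ)*(v:ℝ)) else 0) := by
    intro s hs v hv
    simp only [Finset.mem_Icc] at hs hv
    have := mh_pn (s := (s:ℤ)) (u := (v:ℤ)) hk hn (by omega) (by omega) (by omega) (by omega)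
    simp only [hg]
    rw [this]
    by_cases hc : k < s + v
    · rw [if_pos (by exact_mod_cast hc), if_pos hc]
      push_cast
      ring
    · rw [if_neg (by exact_mod_cast hc), if_neg hc]
      ring
  have qnp : ∀ u ∈ Finset.Icc 1 (k-1), ∀ t ∈ Finset.Icc 1 k,
      g (-(u:ℤ)) ((t:ℤ)) = -2 + 4*(k:ℝ) *
        (if k < t + u then ((t:ℝ)+(u:ℝ)-(k:ℝ))/((t:ℝ)*(u:ℝ)) else 0) := by
    intro u hu t ht
    simp only [Finset.mem_Icc] at hu ht
    have := mh_np (s := (t:ℤ)) (u := (u:ℤ)) hk hn (by omega) (by omega) (by omega) (by omega)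
    simp only [hg]
    rw [this]
    by_cases hc : k < t + u
    · rw [if_pos (by exact_mod_cast hc), if_pos hc]
      push_cast
      ring
    · rw [if_neg (by exact_mod_cast hc), if_neg hc]
      ring
  have hcard1 : ((Finset.Icc 1 k).card : ℝ) = (k:ℝ) := by
    rw [Nat.card_Icc]; push_cast; ring
  have hcard2 : ((Finset.Icc 1 (k-1)).card : ℝ) = (k:ℝ) - 1 := by
    rw [Nat.card_Icc]; push_cast [Nat.cast_sub hk]; ring
  -- row sums for positive s
  have rowPos : ∀ s ∈ Finset.Icc 1 k,
      ∑ t ∈ Finset.Ioc (-(k:ℤ)) k, g ((s:ℤ)) t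
        = 2*(k:ℝ) - 2*((k:ℝ)-1) + 4*(k:ℝ) *
          ∑ v ∈ Finset.Icc 1 (k-1),
            (if k < s + v then ((s:ℝ)+(v:ℝ)-(k:ℝ))/((s:ℝ)*(v:ℝ)) else 0) := by
    intro s hs
    rw [sum_split (g ((s:ℤ)))]
    rw [gs0, Finset.sum_congr rfl (qpn s hs), Finset.sum_congr rfl (qpp s hs),
      Finset.sum_add_distrib, Finset.sum_const, Finset.sum_const, ← Finset.mul_sum,
      nsmul_eq_mul, nsmul_eq_mul, hcard1, hcard2]
    ring
  -- row sums for negative s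
  have rowNeg : ∀ u ∈ Finset.Icc 1 (k-1),
      ∑ t ∈ Finset.Ioc (-(k:ℤ)) k, g (-(u:ℤ)) t
        = 2*((k:ℝ)-1) - 2*(k:ℝ) + 4*(k:ℝ) *
          ∑ t ∈ Finset.Icc 1 k,
            (if k < t + u then ((t:ℝ)+(u:ℝ)-(k:ℝ))/((t:ℝ)*(u:ℝ)) else 0) := by
    intro u hu
    rw [sum_split (g (-(u:ℤ)))]
    rw [gs0, Finset.sum_congr rfl (qnn u hu),
      Finset.sum_congr rfl (fun t ht => qnp u hu t ht),
      Finset.sum_add_distrib, Finset.sum_const, Finset.sum_const, ← Finset.mul_sum,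
      nsmul_eq_mul, nsmul_eq_mul, hcard1, hcard2]
    ring
  -- the M-sum
  have hM : ∑ s ∈ Finset.Icc 1 k, ∑ v ∈ Finset.Icc 1 (k-1),
      (if k < s + v then ((s:ℝ)+(v:ℝ)-(k:ℝ))/((s:ℝ)*(v:ℝ)) else 0)
        = 2*(k:ℝ) - 1 - (k:ℝ) * H := by
    rw [M_lem k hk, hH]
  have hM' : ∑ u ∈ Finset.Icc 1 (k-1), ∑ t ∈ Finset.Icc 1 k,
      (if k < t + u then ((t:ℝ)+(u:ℝ)-(k:ℝ))/((t:ℝ)*(u:ℝ)) else 0)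
        = 2*(k:ℝ) - 1 - (k:ℝ) * H := by
    rw [Finset.sum_comm]
    exact hM
  -- assemble the double sum
  have hS : ∑ s ∈ Finset.Ioc (-(k:ℤ)) k, ∑ t ∈ Finset.Ioc (-(k:ℤ)) k, g s t
      = 2 + 8*(k:ℝ)*(2*(k:ℝ) - 1 - (k:ℝ)*H) := by
    have houter : ∑ s ∈ Finset.Ioc (-(k:ℤ)) k, (∑ t ∈ Finset.Ioc (-(k:ℤ)) k, g s t)
        = (∑ t ∈ Finset.Ioc (-(k:ℤ)) k, g 0 t)
          + ∑ u ∈ Finset.Icc 1 (k-1), (∑ t ∈ Finset.Ioc (-(k:ℤ)) k, g (-(u:ℤ)) t)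
          + ∑ s ∈ Finset.Icc 1 k, (∑ t ∈ Finset.Ioc (-(k:ℤ)) k, g ((s:ℤ)) t) :=
      sum_split _
    rw [houter]
    have hzero : ∑ t ∈ Finset.Ioc (-(k:ℤ)) k, g 0 t = 0 := by
      rw [Finset.sum_congr rfl (fun t _ => g0t t), Finset.sum_const, smul_zero]
    rw [hzero, Finset.sum_congr rfl rowNeg, Finset.sum_congr rfl rowPos,
      Finset.sum_add_distrib, Finset.sum_add_distrib, Finset.sum_const, Finset.sum_const,
      ← Finset.mul_sum, ← Finset.mul_sum, hM, hM',
      nsmul_eq_mul, nsmul_eq_mul, hcard1, hcard2]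
    ring
  rw [step1, hS, hn]
  have h4 : ((2*k : ℕ):ℝ) = 2*(k:ℝ) := by push_cast; ring
  rw [h4]
  field_simp
  ring
end

section
/- Let P be the normalized Haar probability measure (the uniform distribution) on the additive circle ℝ/(2π)ℤ, equipped with its quotient metric (which coincides with the arc length distance on the unit circle). Then for every point x of the circle, the metric spatial depth equals D(x; P) = π²/6 − 1. -/
open MeasureTheory
open scoped Classical

instance : Fact (0 < 2 * Real.pi) := ⟨by positivity⟩

open Real

lemma hs_inv_sq : HasSum (fun n : ℕ => (1:ℝ)/((n+1)^2)) (π^2/6) := by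
  have h := hasSum_zeta_two
  have := (hasSum_nat_add_iff' (f := fun n : ℕ => (1:ℝ)/(n:ℝ)^2) 1).2 h
  simpa using this

lemma hs_tel : HasSum (fun n : ℕ => (1:ℝ)/((n+1)*(n+2))) 1 := by
  have hsum : Summable (fun n : ℕ => (1:ℝ)/((n+1)*(n+2))) := by
    apply Summable.of_nonneg_of_le (fun n => by positivity) (fun n => ?_) hs_inv_sq.summable
    have h1 : (0:ℝ) < (n:ℝ)+1 := by positivity
    rw [div_le_div_iff₀ (by positivity) (by positivity)]
    ring_nf
    nlinarith [sq_nonneg ((n:ℝ)+1)]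
  rw [Summable.hasSum_iff_tendsto_nat hsum]
  have key : ∀ n : ℕ, ∑ i ∈ Finset.range n, (1:ℝ)/((i+1)*(i+2)) = 1 - 1/(n+1) := by
    intro n
    induction n with
    | zero => simp
    | succ n ih =>
      rw [Finset.sum_range_succ, ih]
      have h1 : ((n:ℝ)+1) ≠ 0 := by positivity
      have h2 : ((n:ℝ)+2) ≠ 0 := by positivity
      push_cast
      field_simp
      ring
  simp_rw [key]
  have : Filter.Tendsto (fun n : ℕ => 1/((n:ℝ)+1)) Filter.atTop (nhds 0) :=
    tendsto_one_div_add_atTop_nhds_zero_nat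
  simpa using Filter.Tendsto.const_sub 1 this

lemma hs_c : HasSum (fun n : ℕ => (1:ℝ)/((n+1)^2*(n+2))) (π^2/6 - 1) := by
  have h := hs_inv_sq.sub hs_tel
  convert h using 1
  · rfl
  funext n
  have h1 : ((n:ℝ)+1) ≠ 0 := by positivity
  have h2 : ((n:ℝ)+2) ≠ 0 := by positivity
  field_simp
  ring

lemma phi_integral :
    ∫ x in Set.Ioo (0:ℝ) 1, (1-x)/x * (-Real.log (1-x)) = π^2/6 - 1 := by
  have hcong : ∀ x ∈ Set.Ioo (0:ℝ) 1,
      (1-x)/x * (-Real.log (1-x)) = ∑' n : ℕ, x^n * (1-x) / (n+1) := by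
    intro x hx
    obtain ⟨hx0, hx1⟩ := hx
    have habs : |x| < 1 := by rw [abs_of_pos hx0]; exact hx1
    have h := (hasSum_pow_div_log_of_abs_lt_one habs).mul_right ((1-x)/x)
    have heq : (fun n : ℕ => x ^ (n+1) / (n+1) * ((1-x)/x)) =
        fun n : ℕ => x^n * (1-x) / (n+1) := by
      funext n
      field_simp
      ring
    rw [heq] at h
    rw [h.tsum_eq]
    ring
  rw [setIntegral_congr_fun measurableSet_Ioo hcong]
  have hmeas : ∀ n : ℕ, AEStronglyMeasurable (fun x : ℝ => x^n * (1-x) / (n+1))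
      (volume.restrict (Set.Ioo (0:ℝ) 1)) := by
    intro n
    exact (Continuous.aestronglyMeasurable (by continuity))
  have hint : ∀ n : ℕ, ∫ x in Set.Ioo (0:ℝ) 1, x^n * (1-x) / (n+1) =
      1/((n+1)^2*(n+2)) := by
    intro n
    rw [← integral_Ioc_eq_integral_Ioo, ← intervalIntegral.integral_of_le zero_le_one]
    have : ∀ x : ℝ, x^n * (1-x) / (n+1) = (x^n - x^(n+1)) / (n+1) := by
      intro x; ring
    simp_rw [this, intervalIntegral.integral_div, intervalIntegral.integral_sub
      (intervalIntegral.intervalIntegrable_pow n) (intervalIntegral.intervalIntegrable_pow (n+1)),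
      integral_pow]
    have h1 : ((n:ℝ)+1) ≠ 0 := by positivity
    have h2 : ((n:ℝ)+2) ≠ 0 := by positivity
    push_cast
    field_simp
    ring
  have hnonneg : ∀ n : ℕ, ∀ x ∈ Set.Ioo (0:ℝ) 1, 0 ≤ x^n * (1-x) / (n+1) := by
    intro n x hx
    obtain ⟨h0, h1⟩ := hx
    have h2 : (0:ℝ) ≤ 1 - x := by linarith
    positivity
  have hlin : ∀ n : ℕ, ∫⁻ x in Set.Ioo (0:ℝ) 1, ‖x^n * (1-x) / (n+1)‖₊ =
      ENNReal.ofReal (1/((n+1)^2*(n+2))) := by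
    intro n
    have hcg : ∫⁻ x in Set.Ioo (0:ℝ) 1, ‖x^n * (1-x) / (n+1)‖₊ =
        ∫⁻ x in Set.Ioo (0:ℝ) 1, ENNReal.ofReal (x^n * (1-x) / (n+1)) := by
      apply lintegral_congr_ae
      filter_upwards [ae_restrict_mem measurableSet_Ioo] with x hx
      exact Real.enorm_eq_ofReal (hnonneg n x hx)
    rw [hcg, ← ofReal_integral_eq_lintegral_ofReal, hint n]
    · apply Integrable.mono' (g := fun _ => (1:ℝ))
      · exact integrableOn_const (by simp [Real.volume_Ioo])
      · exact hmeas n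
      · filter_upwards [ae_restrict_mem measurableSet_Ioo] with x hx
        rw [Real.norm_eq_abs, abs_of_nonneg (hnonneg n x hx)]
        have h0 := hx.1; have h1 := hx.2
        have : x^n ≤ 1 := pow_le_one₀ h0.le h1.le
        rw [div_le_one (by positivity)]
        nlinarith
    · filter_upwards [ae_restrict_mem measurableSet_Ioo] with x hx
      exact hnonneg n x hx
  rw [integral_tsum hmeas]
  · simp_rw [hint]
    exact hs_c.tsum_eq
  · simp_rw [enorm_eq_nnnorm, hlin]
    rw [← ENNReal.ofReal_tsum_of_nonneg (fun n => by positivity) hs_c.summable]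
    exact ENNReal.ofReal_ne_top

noncomputable def Wf (s : ℝ) : ℝ := (π - s)/s * (Real.log π - Real.log (π - s))

lemma Wf_bounds {s : ℝ} (hs : s ∈ Set.Ioo 0 π) : 0 ≤ Wf s ∧ Wf s ≤ 1 := by
  obtain ⟨h0, h1⟩ := hs
  have hps : 0 < π - s := by linarith
  have hlogle : Real.log (π - s) ≤ Real.log π :=
    Real.log_le_log hps (by linarith)
  constructor
  · apply mul_nonneg (by positivity) (by linarith)
  · have key : Real.log π - Real.log (π - s) ≤ s / (π - s) := by
      have h2 : Real.log ((π) / (π - s)) ≤ π / (π - s) - 1 :=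
        Real.log_le_sub_one_of_pos (by positivity)
      rw [Real.log_div (by positivity) (by positivity)] at h2
      have : π / (π - s) - 1 = s / (π - s) := by field_simp; ring
      linarith
    calc Wf s ≤ (π - s)/s * (s / (π - s)) := by
          apply mul_le_mul_of_nonneg_left key (by positivity)
      _ = 1 := by field_simp
lemma Wf_measurable : Measurable Wf := by
  exact ((measurable_const.sub measurable_id).div measurable_id).mul
    (measurable_const.sub (Real.measurable_log.comp (measurable_const.sub measurable_id)))

lemma Wf_integrableOn : IntegrableOn Wf (Set.Ioo 0 π) := by
  apply Integrable.mono' (g := fun _ => (1:ℝ)) (integrableOn_const (by simp [Real.volume_Ioo]))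
    Wf_measurable.aestronglyMeasurable
  filter_upwards [ae_restrict_mem measurableSet_Ioo] with x hx
  rw [Real.norm_eq_abs, abs_of_nonneg (Wf_bounds hx).1]
  exact (Wf_bounds hx).2

lemma Wf_intervalIntegrable : IntervalIntegrable Wf volume 0 π := by
  rw [intervalIntegrable_iff_integrableOn_Ioo_of_le Real.pi_pos.le]
  exact Wf_integrableOn


lemma Wf_integral : ∫ s in (0:ℝ)..π, Wf s = π * (π^2/6 - 1) := by
  have h := intervalIntegral.integral_comp_mul_left (a := (0:ℝ)) (b := 1) (f := Wf)
    (c := π) Real.pi_ne_zero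
  have hcong : ∫ x in (0:ℝ)..1, Wf (π * x) =
      ∫ x in (0:ℝ)..1, (1-x)/x * (-Real.log (1-x)) := by
    apply intervalIntegral.integral_congr
    intro x hx
    rw [Set.uIcc_of_le zero_le_one] at hx
    obtain ⟨h0, h1⟩ := hx
    unfold Wf
    rcases eq_or_lt_of_le h0 with h0' | h0'
    · subst h0'; simp
    rcases eq_or_lt_of_le h1 with h1' | h1'
    · subst h1'; norm_num
    · have hx1 : (0:ℝ) < 1 - x := by linarith
      show (π - π * x) / (π * x) * (Real.log π - Real.log (π - π * x)) = _
      have e1 : π - π * x = π * (1 - x) := by ring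
      rw [e1, Real.log_mul Real.pi_ne_zero (by positivity),
        mul_div_mul_left _ _ Real.pi_ne_zero]
      ring
  have hval : ∫ x in (0:ℝ)..1, (1-x)/x * (-Real.log (1-x)) = π^2/6 - 1 := by
    rw [intervalIntegral.integral_of_le zero_le_one, integral_Ioc_eq_integral_Ioo]
    exact phi_integral
  rw [hcong, hval] at h
  rw [mul_zero, mul_one] at h
  have := h.symm
  rw [smul_eq_mul] at this
  field_simp at this
  linarith [this]

noncomputable def Ff (s t : ℝ) : ℝ :=
  if s = 0 ∨ t = 0 then 0
  else (s^2 + t^2 - (min |s-t| (2*π - |s-t|))^2)/(|s| * |t|)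

lemma Ff_pos_pos {s t : ℝ} (hs : s ∈ Set.Ioo 0 π) (ht : t ∈ Set.Ioc 0 π) :
    Ff s t = 2 := by
  obtain ⟨hs0, hs1⟩ := hs; obtain ⟨ht0, ht1⟩ := ht
  rw [Ff, if_neg (by push_neg; exact ⟨ne_of_gt hs0, ne_of_gt ht0⟩)]
  have habs : |s - t| ≤ π := by
    rw [abs_le]; constructor <;> linarith
  rw [min_eq_left (by linarith), abs_of_pos hs0, abs_of_pos ht0, sq_abs]
  have hst : (0:ℝ) < s * t := by positivity
  field_simp
  ring

lemma Ff_neg_arg {s u : ℝ} (hs : s ∈ Set.Ioo 0 π) (hu : u ∈ Set.Ioc 0 (π - s)) :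
    Ff s (-u) = -2 := by
  obtain ⟨hs0, hs1⟩ := hs; obtain ⟨hu0, hu1⟩ := hu
  rw [Ff, if_neg (by push_neg; exact ⟨ne_of_gt hs0, by simp; linarith⟩)]
  have h1 : |s - -u| = s + u := by rw [abs_of_pos (by linarith)]; ring
  rw [h1, min_eq_left (by linarith), abs_of_pos hs0, abs_of_neg (by linarith : -u < 0)]
  have hst : (0:ℝ) < s * u := by positivity
  field_simp
  ring

lemma Ff_neg_arg2 {s u : ℝ} (hs : s ∈ Set.Ioo 0 π) (hu : u ∈ Set.Icc (π - s) π) :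
    Ff s (-u) = -2 + 4*π*(s+u-π)/(s*u) := by
  obtain ⟨hs0, hs1⟩ := hs; obtain ⟨hu0, hu1⟩ := hu
  have hu0' : 0 < u := by linarith
  rw [Ff, if_neg (by push_neg; exact ⟨ne_of_gt hs0, by simp; linarith⟩)]
  have h1 : |s - -u| = s + u := by rw [abs_of_pos (by linarith)]; ring
  rw [h1, min_eq_right (by linarith), abs_of_pos hs0, abs_of_neg (by linarith : -u < 0)]
  have hst : (0:ℝ) < s * u := by positivity
  field_simp
  ring

lemma inner_integral {s : ℝ} (hs : s ∈ Set.Ioo 0 π) :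
    ∫ t in (-π)..π, Ff s t = 4*π - 4*π * Wf s := by
  obtain ⟨hs0, hs1⟩ := hs
  have hps : 0 < π - s := by linarith
  -- the right half
  have hright : ∫ t in (0:ℝ)..π, Ff s t = 2*π := by
    rw [intervalIntegral.integral_of_le Real.pi_pos.le,
      setIntegral_congr_fun measurableSet_Ioc (fun t ht => Ff_pos_pos ⟨hs0, hs1⟩ ht)]
    simp [Real.pi_pos.le]
    ring
  have hIIright : IntervalIntegrable (Ff s) volume 0 π := by
    rw [intervalIntegrable_iff_integrableOn_Ioc_of_le Real.pi_pos.le]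
    exact (integrableOn_const (by simp [Real.pi_pos])).congr_fun
      (fun t ht => (Ff_pos_pos ⟨hs0, hs1⟩ ht).symm) measurableSet_Ioc
  -- the left half via neg substitution
  have hnegsub : ∫ t in (-π)..(0:ℝ), Ff s t = ∫ u in (0:ℝ)..π, Ff s (-u) := by
    rw [intervalIntegral.integral_comp_neg (fun t => Ff s t)]
    norm_num
  -- piece on [0, π-s]
  have hp1 : ∫ u in (0:ℝ)..(π-s), Ff s (-u) = -2*(π-s) := by
    rw [intervalIntegral.integral_of_le hps.le,
      setIntegral_congr_fun measurableSet_Ioc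
        (fun u hu => Ff_neg_arg ⟨hs0, hs1⟩ hu)]
    simp [ENNReal.toReal_ofReal hps.le]
    rw [max_eq_left hps.le]
    ring
  have hII1 : IntervalIntegrable (fun u => Ff s (-u)) volume 0 (π-s) := by
    rw [intervalIntegrable_iff_integrableOn_Ioc_of_le hps.le]
    exact (integrableOn_const (by simp [hps])).congr_fun
      (fun u hu => (Ff_neg_arg ⟨hs0, hs1⟩ hu).symm) measurableSet_Ioc
  -- piece on [π-s, π]
  set g : ℝ → ℝ := fun u => -2 + 4*π*(s+u-π)/(s*u) with hg
  have hgcont : ContinuousOn g (Set.uIcc (π-s) π) := by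
    rw [Set.uIcc_of_le (by linarith)]
    apply ContinuousOn.add continuousOn_const
    apply ContinuousOn.div (by fun_prop) (by fun_prop)
    intro u hu
    have : 0 < u := lt_of_lt_of_le hps hu.1
    positivity
  have hIIg : IntervalIntegrable g volume (π-s) π := hgcont.intervalIntegrable
  have hEq2 : Set.EqOn (fun u => Ff s (-u)) g (Set.Icc (π-s) π) :=
    fun u hu => Ff_neg_arg2 ⟨hs0, hs1⟩ hu
  have hp2eq : ∫ u in (π-s)..π, Ff s (-u) = ∫ u in (π-s)..π, g u :=
    intervalIntegral.integral_congr (by rw [Set.uIcc_of_le (by linarith)]; exact hEq2)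
  have hII2 : IntervalIntegrable (fun u => Ff s (-u)) volume (π-s) π := by
    rw [intervalIntegrable_iff_integrableOn_Ioc_of_le (by linarith)]
    refine IntegrableOn.congr_fun ?_ (fun u hu => (hEq2 (Set.Ioc_subset_Icc_self hu)).symm)
      measurableSet_Ioc
    rw [← intervalIntegrable_iff_integrableOn_Ioc_of_le (by linarith)]
    exact hIIg
  -- FTC on [π-s, π]
  set Φ : ℝ → ℝ := fun u => -2*u + 4*π/s * (u + (s-π)*Real.log u) with hΦ
  have hftc : ∫ u in (π-s)..π, g u = Φ π - Φ (π-s) := by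
    apply intervalIntegral.integral_eq_sub_of_hasDerivAt
    · intro u hu
      rw [Set.uIcc_of_le (by linarith)] at hu
      have hu0 : 0 < u := lt_of_lt_of_le hps hu.1
      have hlog : HasDerivAt Real.log u⁻¹ u := Real.hasDerivAt_log (ne_of_gt hu0)
      have h1 : HasDerivAt (fun u : ℝ => u + (s-π)*Real.log u) (1 + (s-π)*u⁻¹) u :=
        (hasDerivAt_id u).add (hlog.const_mul (s-π))
      have h2 : HasDerivAt (fun u : ℝ => -2*u) (-2) u := by
        simpa using (hasDerivAt_id u).const_mul (-2)
      have h3 := h2.add (h1.const_mul (4*π/s))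
      convert h3 using 1
      · rfl
      rw [hg]
      field_simp
      ring
    · exact hIIg
  have hleftval : ∫ u in (0:ℝ)..π, Ff s (-u) = (-2*(π-s)) + (Φ π - Φ (π-s)) := by
    rw [← intervalIntegral.integral_add_adjacent_intervals hII1 hII2, hp1, hp2eq, hftc]
  have hIIleft : IntervalIntegrable (Ff s) volume (-π) 0 := by
    have h := (hII1.trans hII2).symm
    rw [IntervalIntegrable.iff_comp_neg] at h
    simpa using h
  rw [← intervalIntegral.integral_add_adjacent_intervals hIIleft hIIright, hright,
    hnegsub, hleftval, hΦ, Wf]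
  have hlogπ : Real.log π - Real.log (π - s) = Real.log π - Real.log (π - s) := rfl
  field_simp
  ring

lemma coe_eq_zero_iff_pi {s : ℝ} (hs : s ∈ Set.Ioc (-π) π) :
    (↑s : AddCircle (2*π)) = 0 ↔ s = 0 := by
  rw [AddCircle.coe_eq_zero_iff]
  constructor
  · rintro ⟨n, hn⟩
    rw [zsmul_eq_mul] at hn
    have habs : |s| ≤ π := abs_le.2 ⟨hs.1.le, hs.2⟩
    have hn0 : n = 0 := by
      by_contra hne
      have h1 : (1:ℝ) ≤ |(n:ℝ)| := by
        rw [← Int.cast_abs]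
        exact_mod_cast Int.one_le_abs hne
      have : 2*π ≤ |s| := by
        rw [← hn, abs_mul, abs_of_pos (by linarith [Real.pi_pos] : (0:ℝ) < 2*π)]
        nlinarith [Real.pi_pos]
      nlinarith [Real.pi_pos]
    rw [hn0] at hn
    simpa using hn.symm
  · rintro rfl; exact ⟨0, by simp⟩

lemma norm_coe_pi {s : ℝ} (hs : |s| ≤ π) : ‖(↑s : AddCircle (2*π))‖ = |s| := by
  rw [AddCircle.norm_coe_eq_abs_iff (2*π) (by nlinarith [Real.pi_pos] : (2*π:ℝ) ≠ 0),
    abs_of_pos (by linarith [Real.pi_pos] : (0:ℝ) < 2*π)]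
  linarith

lemma norm_coe_pi2 {y : ℝ} (hy : |y| ≤ 2*π) :
    ‖(↑y : AddCircle (2*π))‖ = min |y| (2*π - |y|) := by
  rcases le_or_gt |y| π with h | h
  · rw [norm_coe_pi h, min_eq_left (by linarith)]
  · rw [min_eq_right (by linarith)]
    rcases le_or_gt 0 y with hy0 | hy0
    · rw [abs_of_nonneg hy0] at hy h ⊢
      have : (↑y : AddCircle (2*π)) = ↑(y - 2*π) := by
        rw [← AddCircle.coe_add_period (2*π) (y - 2*π)]; ring_nf
      rw [this, norm_coe_pi (by rw [abs_le]; constructor <;> linarith)]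
      rw [abs_of_nonpos (by linarith)]
      ring
    · rw [abs_of_neg hy0] at hy h ⊢
      have : (↑y : AddCircle (2*π)) = ↑(y + 2*π) := (AddCircle.coe_add_period (2*π) y).symm
      rw [this, norm_coe_pi (by rw [abs_le]; constructor <;> linarith)]
      rw [abs_of_nonneg (by linarith)]
      ring

noncomputable def mhG {X : Type*} [NormedAddCommGroup X] (u v : X) : ℝ :=
  if u = 0 ∨ v = 0 then 0 else (‖u‖^2 + ‖v‖^2 - ‖u - v‖^2)/(‖u‖ * ‖v‖)

lemma mh_eq_mhG {X : Type*} [NormedAddCommGroup X] (x₁ x₂ x₃ : X) :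
    mh x₁ x₂ x₃ = mhG (x₁ - x₃) (x₂ - x₃) := by
  rw [mh, mhG]
  have h1 : (x₃ = x₁ ∨ x₃ = x₂) ↔ (x₁ - x₃ = 0 ∨ x₂ - x₃ = 0) := by
    rw [sub_eq_zero, sub_eq_zero, eq_comm (a := x₃) (b := x₁), eq_comm (a := x₃) (b := x₂)]
  rw [if_congr h1 rfl rfl, dist_eq_norm x₁ x₃, dist_eq_norm x₂ x₃, dist_eq_norm x₁ x₂,
    ← sub_sub_sub_cancel_right x₁ x₂ x₃]

lemma mhG_coe {s t : ℝ} (hs : s ∈ Set.Ioc (-π) π) (ht : t ∈ Set.Ioc (-π) π) :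
    mhG (↑s : AddCircle (2*π)) (↑t) = Ff s t := by
  rw [mhG, Ff]
  have habs_s : |s| ≤ π := abs_le.2 ⟨hs.1.le, hs.2⟩
  have habs_t : |t| ≤ π := abs_le.2 ⟨ht.1.le, ht.2⟩
  have habs_st : |s - t| ≤ 2*π := by
    rw [abs_le]; obtain ⟨a,b⟩ := hs; obtain ⟨c,d⟩ := ht; constructor <;> linarith
  have hcond : ((↑s : AddCircle (2*π)) = 0 ∨ (↑t : AddCircle (2*π)) = 0) ↔ (s = 0 ∨ t = 0) :=
    or_congr (coe_eq_zero_iff_pi hs) (coe_eq_zero_iff_pi ht)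
  simp only [hcond]
  split
  · rfl
  · rw [← AddCircle.coe_sub, norm_coe_pi habs_s, norm_coe_pi habs_t, norm_coe_pi2 habs_st,
      sq_abs, sq_abs]

lemma Ff_neg (s t : ℝ) : Ff (-s) (-t) = Ff s t := by
  rw [Ff, Ff]
  have h0 : (-s = 0 ∨ -t = 0) ↔ (s = 0 ∨ t = 0) := by
    simp [neg_eq_zero]
  have h1 : |-s - -t| = |s - t| := by
    rw [show -s - -t = -(s - t) by ring, abs_neg]
  have h2 : |-s| = |s| := abs_neg s
  have h3 : |-t| = |t| := abs_neg t
  have h4 : (-s)^2 = s^2 := neg_sq s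
  have h5 : (-t)^2 = t^2 := neg_sq t
  simp only [h0, h1, h2, h3, h4, h5]

noncomputable def AAf (s : ℝ) : ℝ := 4*π - 4*π * Wf |s|

lemma inner_Ioc {s : ℝ} (hs : s ∈ Set.Ioo (-π) π) (hs0 : s ≠ 0) :
    ∫ t in Set.Ioc (-π) π, Ff s t = AAf s := by
  rw [← intervalIntegral.integral_of_le (by linarith [Real.pi_pos] : -π ≤ π)]
  rcases lt_or_gt_of_ne hs0 with h | h
  · have hpos : -s ∈ Set.Ioo 0 π := ⟨by linarith, by linarith [hs.1]⟩
    have he : ∀ t : ℝ, Ff s t = Ff (-s) (-t) := by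
      intro t
      rw [← Ff_neg (-s) (-t), neg_neg, neg_neg]
    simp_rw [he]
    rw [intervalIntegral.integral_comp_neg (fun t => Ff (-s) t)]
    rw [neg_neg, inner_integral hpos, AAf, abs_of_neg h]
  · have hpos : s ∈ Set.Ioo 0 π := ⟨h, hs.2⟩
    rw [inner_integral hpos, AAf, abs_of_pos h]

lemma AAf_even (s : ℝ) : AAf (-s) = AAf s := by rw [AAf, AAf, abs_neg]

lemma AAf_II_right : IntervalIntegrable AAf volume 0 π := by
  rw [intervalIntegrable_iff_integrableOn_Ioc_of_le Real.pi_pos.le]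
  have h1 : IntervalIntegrable (fun s => 4*π - 4*π * Wf s) volume 0 π :=
    intervalIntegrable_const.sub (Wf_intervalIntegrable.const_mul (4*π))
  rw [intervalIntegrable_iff_integrableOn_Ioc_of_le Real.pi_pos.le] at h1
  exact h1.congr_fun (fun s hs => by rw [AAf, abs_of_pos hs.1]) measurableSet_Ioc

lemma AAf_int_right : ∫ s in (0:ℝ)..π, AAf s = 8*π^2 - 2*π^4/3 := by
  have hcong : ∫ s in (0:ℝ)..π, AAf s = ∫ s in (0:ℝ)..π, (4*π - 4*π * Wf s) := by
    apply intervalIntegral.integral_congr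
    intro s hs
    rw [Set.uIcc_of_le Real.pi_pos.le] at hs
    rw [AAf, abs_of_nonneg hs.1]
  have hmul : ∫ s in (0:ℝ)..π, 4*π * Wf s = 4*π * (π * (π^2/6 - 1)) := by
    rw [intervalIntegral.integral_const_mul, Wf_integral]
  rw [hcong, intervalIntegral.integral_sub intervalIntegrable_const
    (Wf_intervalIntegrable.const_mul (4*π)), hmul, intervalIntegral.integral_const]
  simp only [sub_zero, smul_eq_mul]
  ring

lemma big (x : AddCircle (2*π)) :
    ∫ x₁ : AddCircle (2*π), ∫ x₂, mh x₁ x₂ x ∂volume ∂volume = 16*π^2 - 4*π^4/3 := by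
  have h1 : ∀ x₁ : AddCircle (2*π),
      (∫ x₂, mh x₁ x₂ x ∂volume) = (fun u => ∫ v, mhG u v ∂volume) (x₁ - x) := by
    intro x₁
    simp only
    calc ∫ x₂, mh x₁ x₂ x ∂volume = ∫ x₂, mhG (x₁ - x) (x₂ - x) ∂volume := by
          simp_rw [mh_eq_mhG]
      _ = ∫ v, mhG (x₁ - x) v ∂volume :=
          integral_sub_right_eq_self (fun v => mhG (x₁ - x) v) x
  simp_rw [h1]
  rw [integral_sub_right_eq_self (fun u => ∫ v, mhG u v ∂volume) x]
  rw [← AddCircle.integral_preimage (2*π) (-π) (fun u => ∫ v, mhG u v ∂volume)]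
  rw [show -π + 2*π = π by ring]
  have h3 : Set.EqOn (fun s : ℝ => ∫ v, mhG (↑s : AddCircle (2*π)) v ∂volume)
      (fun s => ∫ t in Set.Ioc (-π) π, Ff s t) (Set.Ioc (-π) π) := by
    intro s hs
    simp only
    rw [← AddCircle.integral_preimage (2*π) (-π) (fun v => mhG (↑s : AddCircle (2*π)) v),
      show -π + 2*π = π by ring]
    exact setIntegral_congr_fun measurableSet_Ioc (fun t ht => mhG_coe hs ht)
  rw [setIntegral_congr_fun measurableSet_Ioc h3]
  have h4 : ∫ s in Set.Ioc (-π) π, (∫ t in Set.Ioc (-π) π, Ff s t) =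
      ∫ s in Set.Ioc (-π) π, AAf s := by
    apply setIntegral_congr_ae measurableSet_Ioc
    have hz : (volume : Measure ℝ) {(0:ℝ), π} = 0 := (Set.to_countable _).measure_zero _
    filter_upwards [compl_mem_ae_iff.2 hz] with s hsn hmem
    simp only [Set.mem_compl_iff, Set.mem_insert_iff, Set.mem_singleton_iff, not_or] at hsn
    exact inner_Ioc ⟨hmem.1, lt_of_le_of_ne hmem.2 hsn.2⟩ hsn.1
  rw [h4, ← intervalIntegral.integral_of_le (by linarith [Real.pi_pos] : -π ≤ π)]
  have hIIleft : IntervalIntegrable AAf volume (-π) 0 := by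
    have h := AAf_II_right.symm
    rw [IntervalIntegrable.iff_comp_neg] at h
    have he : (fun x : ℝ => AAf (-x)) = AAf := funext AAf_even
    rw [he] at h
    simpa using h
  rw [← intervalIntegral.integral_add_adjacent_intervals hIIleft AAf_II_right]
  have hleft : ∫ s in (-π)..(0:ℝ), AAf s = ∫ s in (0:ℝ)..π, AAf s := by
    have := intervalIntegral.integral_comp_neg AAf (a := 0) (b := π)
    simp_rw [AAf_even] at this
    rw [neg_zero] at this
    exact this.symm
  rw [hleft, AAf_int_right]
  ring

theorem msDepth_circle_uniform (x : AddCircle (2 * Real.pi)) :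
    msDepth x ((ENNReal.ofReal (2 * Real.pi))⁻¹ •
        (volume : Measure (AddCircle (2 * Real.pi)))) =
      Real.pi ^ 2 / 6 - 1 := by
  rw [msDepth]
  have hc : ((ENNReal.ofReal (2 * π))⁻¹).toReal = (2*π)⁻¹ := by
    rw [ENNReal.toReal_inv, ENNReal.toReal_ofReal (by positivity)]
  rw [integral_smul_measure]
  simp_rw [integral_smul_measure]
  rw [integral_smul, big x, hc, smul_eq_mul, smul_eq_mul]
  have hπ : (π:ℝ) ≠ 0 := Real.pi_ne_zero
  field_simp
  ring
end
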